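/- arXiv:1801.07949 — 2 statements merged into one kernel-verified Lean document; each statement's English description precedes it below -/
import Mathlib

section
/- The eta-quotient identity E₁⁹E₉³ + 9qE₁⁶E₉⁶ + 27q²E₁³E₉⁹ = E₃¹² holds as an identity of formal power series in q, where E_k = (q^k;q^k)_∞ = ∏_{n≥1}(1-q^{kn}). -/
open PowerSeries Finset

/-- `E k` is the formal power series `∏_{n≥1} (1 - q^{kn})`.  Its `N`-th coefficient
agrees with that of the partial product over `n ≤ N+1`. -/
noncomputable def E (k : ℕ) : PowerSeries ℤ :=
  PowerSeries.mk fun N =>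
    PowerSeries.coeff (R := ℤ) N
      (∏ n ∈ Finset.range (N + 1), (1 - (PowerSeries.X : PowerSeries ℤ) ^ (k * (n + 1))))

/-- Inverse of a power series whose constant coefficient is `1`. -/
noncomputable def inv1 (f : PowerSeries ℤ) : PowerSeries ℤ := PowerSeries.invOfUnit f 1

/-- The Borwein cubic theta function
`a(q) = 1 + 6 ∑_{n≥0} (q^{3n+1}/(1-q^{3n+1}) - q^{3n+2}/(1-q^{3n+2}))`:
its `N`-th coefficient (for `N ≥ 1`) is `6` times the number of divisors of `N`
congruent to `1 mod 3` minus the number congruent to `2 mod 3`. -/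
noncomputable def aq : PowerSeries ℤ :=
  PowerSeries.mk fun N =>
    if N = 0 then 1
    else 6 * (((N.divisors.filter fun d => d % 3 = 1).card : ℤ)
        - ((N.divisors.filter fun d => d % 3 = 2).card : ℤ))

/-- Theta-like series `∑_{m ∈ ℤ^{k-1}} q^{Q(m)}` with
`Q(m) = ∑ m_i² + ∑_{i<j} m_i m_j`. -/
noncomputable def frobTheta (k : ℕ) : PowerSeries ℤ :=
  PowerSeries.mk fun N =>
    (Nat.card {m : Fin (k - 1) → ℤ //
      (∑ i, m i ^ 2 + ∑ i, ∑ j, if i < j then m i * m j else 0) = (N : ℤ)} : ℤ)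

/-- `cphi k n` is the number of `k`-colored generalized Frobenius partitions of `n`,
via Andrews' generating function `CΦ_k(q) = (q;q)_∞^{-k} · frobTheta k`. -/
noncomputable def cphi (k n : ℕ) : ℤ :=
  PowerSeries.coeff (R := ℤ) n (frobTheta k * inv1 (E 1 ^ k))

/-- Substitution `q ↦ q³` on formal power series. -/
noncomputable def cubeSub (f : PowerSeries ℤ) : PowerSeries ℤ :=
  PowerSeries.mk fun N => if 3 ∣ N then PowerSeries.coeff (R := ℤ) (N / 3) f else 0


namespace EtaAux

def tri : ℕ → ℕ
  | 0 => 0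
  | n+1 => tri n + (n+1)

lemma two_tri (n : ℕ) : 2 * tri n = n * (n+1) := by
  induction n with
  | zero => rfl
  | succ n ih => show 2 * (tri n + (n+1)) = _; rw [Nat.mul_add]; rw [ih]; ring

lemma tri_strictMono : StrictMono tri :=
  strictMono_nat_of_lt_succ fun n => by show tri n < tri n + (n+1); omega

lemma le_tri (n : ℕ) : n ≤ tri n := by
  induction n with
  | zero => exact le_rfl
  | succ n ih => show n+1 ≤ tri n + (n+1); omega

variable {A : Type*} [CommRing A]

def cf (y : A) (m k : ℕ) : A :=
  (∏ i ∈ Ico (m+1-k) (m+1), (1 - y^i)) * (∏ i ∈ Ico (m+k+2) (2*m+2), (1 - y^i))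

lemma cf_eq_zero (y : A) {m k : ℕ} (hk : m+1 ≤ k) : cf y m k = 0 := by
  have h0 : (0:ℕ) ∈ Ico (m+1-k) (m+1) := by
    simp [Nat.sub_eq_zero_of_le hk]
  rw [cf, Finset.prod_eq_zero h0 (by simp), zero_mul]

lemma cf_rec (y : A) {m k : ℕ} (hk : k ≤ m+1) :
    cf y (m+1) k = (1 - y^(m+1)) * ((1 + y^(2*m+2)) * cf y m k
      + y^(m+1-k) * cf y m (k-1) + y^(m+k+2) * cf y m (k+1)) := by
  have pb : ∀ (a b : ℕ), a < b →
      ∏ i ∈ Ico a b, (1 - y^i) = (1 - y^a) * ∏ i ∈ Ico (a+1) b, (1 - y^i) :=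
    fun a b h => Finset.prod_eq_prod_Ico_succ_bot h _
  have pt : ∀ (a b : ℕ), a ≤ b →
      ∏ i ∈ Ico a (b+1), (1 - y^i) = (∏ i ∈ Ico a b, (1 - y^i)) * (1 - y^b) :=
    fun a b h => Finset.prod_Ico_succ_top h _
  rcases Nat.eq_zero_or_pos m with rfl | hm
  · -- m = 0, k ∈ {0,1}
    interval_cases k
    · show cf y 1 0 = _
      have e1 : cf y 1 0 = (1 - y^3) := by
        rw [cf]
        rw [show (1:ℕ)+1-0 = 2 from rfl, Finset.Ico_self,
          show (2:ℕ)*1+2 = 3+1 from rfl, pt 3 3 le_rfl, Finset.Ico_self]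
        ring
      have e2 : cf y 0 0 = 1 := by
        rw [cf]; rw [show (0:ℕ)+1-0 = 1 from rfl, Finset.Ico_self,
          show (2:ℕ)*0+2 = 2 from rfl, Finset.Ico_self]; ring
      have e3 : cf y 0 1 = 0 := cf_eq_zero y le_rfl
      rw [e1, e2, e3]; ring
    · have e1 : cf y 1 1 = (1 - y) := by
        rw [cf]
        rw [show (1:ℕ)+1-1 = 1 from rfl, pt 1 1 le_rfl, Finset.Ico_self,
          show (1:ℕ)+1+2 = 2*1+2 from rfl, Finset.Ico_self]
        ring
      have e2 : cf y 0 0 = 1 := by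
        rw [cf]; rw [show (0:ℕ)+1-0 = 1 from rfl, Finset.Ico_self,
          show (2:ℕ)*0+2 = 2 from rfl, Finset.Ico_self]; ring
      have e3 : cf y 0 1 = 0 := cf_eq_zero y le_rfl
      have e4 : cf y 0 2 = 0 := cf_eq_zero y (by norm_num)
      rw [e1, e3, e2, e4]
      norm_num
  · rcases Nat.eq_zero_or_pos k with rfl | hk1
    · -- k = 0, m ≥ 1
      obtain ⟨j, rfl⟩ : ∃ j, m = j+1 := ⟨m-1, by omega⟩
      have D := ∏ i ∈ Ico (j+4) (2*j+4), (1 - y^i)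
      have e1 : cf y (j+1+1) 0
          = (∏ i ∈ Ico (j+4) (2*j+4), (1 - y^i)) * ((1 - y^(2*j+4)) * (1 - y^(2*j+5))) := by
        rw [cf, show j+1+1+1-0 = j+3 from by omega, Finset.Ico_self, Finset.prod_empty, one_mul,
          show j+1+1+0+2 = j+4 from by omega, show 2*(j+1+1)+2 = (2*j+5)+1 from by omega,
          pt (j+4) (2*j+5) (by omega), show (2*j+5) = (2*j+4)+1 from by omega,
          pt (j+4) (2*j+4) (by omega)]
        ring
      have e2 : cf y (j+1) 0 = (1 - y^(j+3)) * ∏ i ∈ Ico (j+4) (2*j+4), (1 - y^i) := by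
        rw [cf, show j+1+1-0 = j+2 from by omega, Finset.Ico_self, Finset.prod_empty, one_mul,
          show j+1+0+2 = j+3 from by omega, show 2*(j+1)+2 = 2*j+4 from by omega,
          pb (j+3) (2*j+4) (by omega), show j+3+1 = j+4 from by omega]
      have e3 : cf y (j+1) 1 = (1 - y^(j+1)) * ∏ i ∈ Ico (j+4) (2*j+4), (1 - y^i) := by
        rw [cf, show j+1+1-1 = j+1 from by omega, pb (j+1) (j+2) (by omega),
          show j+1+1 = j+2 from rfl, Finset.Ico_self,
          show j+1+1+2 = j+4 from by omega, show 2*(j+1)+2 = 2*j+4 from by omega]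
        ring
      rw [e1, show (0:ℕ)+1 = 1 from rfl] at *
      rw [e1, e2, e3, show j+1+1-0 = j+2 from by omega, show j+1+0+2 = j+3 from by omega,
        show 2*(j+1)+2 = 2*j+4 from by omega]
      ring
    · rcases eq_or_lt_of_le hk with rfl | hk2
      · -- k = m+1
        have e1 : cf y (m+1) (m+1)
            = (∏ i ∈ Ico 1 (m+1), (1 - y^i)) * (1 - y^(m+1)) := by
          rw [cf, show m+1+1-(m+1) = 1 from by omega, pt 1 (m+1) (by omega),
            show m+1+(m+1)+2 = 2*(m+1)+2 from by omega, Finset.Ico_self]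
          ring
        have e2 : cf y m (m+1) = 0 := cf_eq_zero y le_rfl
        have e3 : cf y m (m+1+1) = 0 := cf_eq_zero y (by omega)
        have e4 : cf y m (m+1-1) = ∏ i ∈ Ico 1 (m+1), (1 - y^i) := by
          rw [show m+1-1 = m from by omega, cf, show m+1-m = 1 from by omega,
            show m+m+2 = 2*m+2 from by omega, Finset.Ico_self]
          ring
        rw [e1, e2, e3, e4, show m+1-(m+1) = 0 from by omega]
        ring
      · -- 1 ≤ k ≤ m
        have hkm : k ≤ m := by omega
        rcases eq_or_lt_of_le hkm with rfl | hk3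
        · -- k = m, m ≥ 1  (here variable named k; m = k)
          obtain ⟨j, rfl⟩ : ∃ j, k = j+1 := ⟨k-1, by omega⟩
          set F := ∏ i ∈ Ico 2 (j+2), (1 - y^i) with hF
          have e1 : cf y (j+1+1) (j+1) = (F * (1 - y^(j+2))) * (1 - y^(2*j+5)) := by
            rw [cf, show j+1+1+1-(j+1) = 2 from by omega, show j+1+1+1 = (j+2)+1 from by omega,
              pt 2 (j+2) (by omega),
              show j+1+1+(j+1)+2 = 2*j+5 from by omega, show 2*(j+1+1)+2 = (2*j+5)+1 from by omega,
              pt (2*j+5) (2*j+5) le_rfl, Finset.Ico_self]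
            ring
          have e2 : cf y (j+1) (j+1) = (1 - y^1) * F := by
            rw [cf, show j+1+1-(j+1) = 1 from by omega, pb 1 (j+2) (by omega),
              show j+1+(j+1)+2 = 2*(j+1)+2 from by omega, Finset.Ico_self]
            ring
          have e3 : cf y (j+1) (j+1-1) = F * (1 - y^(2*j+3)) := by
            rw [show j+1-1 = j from by omega, cf, show j+1+1-j = 2 from by omega,
              show j+1+j+2 = 2*j+3 from by omega, show 2*(j+1)+2 = (2*j+3)+1 from by omega,
              pt (2*j+3) (2*j+3) le_rfl, Finset.Ico_self]
            ring
          have e4 : cf y (j+1) (j+1+1) = 0 := cf_eq_zero y (by omega)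
          rw [e1, e2, e3, e4, show j+1+1-(j+1) = 1 from by omega,
            show j+1+(j+1)+2 = 2*j+4 from by omega, show 2*(j+1)+2 = 2*j+4 from by omega]
          ring
        · -- generic: 1 ≤ k, k+1 ≤ m
          obtain ⟨j, rfl⟩ : ∃ j, k = j+1 := ⟨k-1, by omega⟩
          obtain ⟨a, rfl⟩ : ∃ a, m = j+a+2 := ⟨m-j-2, by omega⟩
          set F := ∏ i ∈ Ico (a+3) (j+a+3), (1 - y^i) with hF
          set G := ∏ i ∈ Ico (2*j+a+6) (2*j+2*a+6), (1 - y^i) with hG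
          have e1 : cf y (j+a+2+1) (j+1)
              = (F * (1 - y^(j+a+3))) * (G * ((1 - y^(2*j+2*a+6)) * (1 - y^(2*j+2*a+7)))) := by
            rw [cf, show j+a+2+1+1-(j+1) = a+3 from by omega,
              show j+a+2+1+1 = (j+a+3)+1 from by omega, pt (a+3) (j+a+3) (by omega),
              show j+a+2+1+(j+1)+2 = 2*j+a+6 from by omega,
              show 2*(j+a+2+1)+2 = (2*j+2*a+7)+1 from by omega,
              pt (2*j+a+6) (2*j+2*a+7) (by omega),
              show 2*j+2*a+7 = (2*j+2*a+6)+1 from by omega,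
              pt (2*j+a+6) (2*j+2*a+6) (by omega)]
            ring
          have e2 : cf y (j+a+2) (j+1) = ((1 - y^(a+2)) * F) * ((1 - y^(2*j+a+5)) * G) := by
            rw [cf, show j+a+2+1-(j+1) = a+2 from by omega, pb (a+2) (j+a+3) (by omega),
              show a+2+1 = a+3 from by omega, show j+a+2+1 = j+a+3 from by omega,
              show j+a+2+(j+1)+2 = 2*j+a+5 from by omega,
              show 2*(j+a+2)+2 = 2*j+2*a+6 from by omega,
              pb (2*j+a+5) (2*j+2*a+6) (by omega), show 2*j+a+5+1 = 2*j+a+6 from by omega]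
          have e3 : cf y (j+a+2) (j+1-1)
              = F * (((1 - y^(2*j+a+4)) * (1 - y^(2*j+a+5))) * G) := by
            rw [show j+1-1 = j from by omega, cf, show j+a+2+1-j = a+3 from by omega,
              show j+a+2+1 = j+a+3 from by omega,
              show j+a+2+j+2 = 2*j+a+4 from by omega,
              show 2*(j+a+2)+2 = 2*j+2*a+6 from by omega,
              pb (2*j+a+4) (2*j+2*a+6) (by omega), show 2*j+a+4+1 = 2*j+a+5 from by omega,
              pb (2*j+a+5) (2*j+2*a+6) (by omega), show 2*j+a+5+1 = 2*j+a+6 from by omega]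
            ring
          have e4 : cf y (j+a+2) (j+1+1) = ((1 - y^(a+1)) * ((1 - y^(a+2)) * F)) * G := by
            rw [cf, show j+a+2+1-(j+1+1) = a+1 from by omega, pb (a+1) (j+a+3) (by omega),
              show a+1+1 = a+2 from by omega, pb (a+2) (j+a+3) (by omega),
              show a+2+1 = a+3 from by omega, show j+a+2+1 = j+a+3 from by omega,
              show j+a+2+(j+1+1)+2 = 2*j+a+6 from by omega,
              show 2*(j+a+2)+2 = 2*j+2*a+6 from by omega]
          rw [e1, e2, e3, e4, show j+a+2+1-(j+1) = a+2 from by omega,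
            show j+a+2+(j+1)+2 = 2*j+a+5 from by omega,
            show 2*(j+a+2)+2 = 2*j+2*a+6 from by omega,
            show j+a+2+1 = j+a+3 from by omega]
          ring

def sgn (y : A) (k : ℕ) : A := (-1)^k * y^(tri k)

lemma sgn_zero (y : A) : sgn y 0 = 1 := by simp [sgn, tri]

lemma sgn_succ (y : A) (k : ℕ) : sgn y (k+1) = -(y^(k+1)) * sgn y k := by
  simp only [sgn, show tri (k+1) = tri k + (k+1) from rfl, pow_add, pow_succ]
  ring

noncomputable def MR (y : A) (m : ℕ) : Polynomial A :=
  ∑ k ∈ range (m+1), Polynomial.C (sgn y k * cf y m k) *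
    ((Polynomial.X : Polynomial A)^(m-k) - Polynomial.X^(m+k+1))

lemma MR_succ (y : A) (m : ℕ) :
    MR y (m+1) = (Polynomial.C (1 - y^(m+1)) *
      ((1 - Polynomial.C (y^(m+1)) * Polynomial.X) *
        (Polynomial.X - Polynomial.C (y^(m+1))))) * MR y m := by
  classical
  set q1 : A := y^(m+1) with hq1
  set X : Polynomial A := Polynomial.X with hXdef
  have key : MR y (m+1) = Polynomial.C (1 - q1) *
      ((∑ k ∈ range (m+2), Polynomial.C (sgn y k * ((1 + y^(2*m+2)) * cf y m k)) *
          (X^(m+1-k) - X^(m+k+2)))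
      + (∑ k ∈ range (m+2), Polynomial.C (sgn y k * (y^(m+1-k) * cf y m (k-1))) *
          (X^(m+1-k) - X^(m+k+2)))
      + (∑ k ∈ range (m+2), Polynomial.C (sgn y k * (y^(m+k+2) * cf y m (k+1))) *
          (X^(m+1-k) - X^(m+k+2)))) := by
    rw [MR, ← Finset.sum_add_distrib, ← Finset.sum_add_distrib, Finset.mul_sum]
    refine Finset.sum_congr rfl fun k hk => ?_
    have hkle : k ≤ m+1 := Nat.lt_succ_iff.mp (Finset.mem_range.mp hk)
    rw [cf_rec y hkle]
    simp only [map_mul, map_add, map_sub, map_one]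
    ring
  -- S1
  have hS1 : (∑ k ∈ range (m+2), Polynomial.C (sgn y k * ((1 + y^(2*m+2)) * cf y m k)) *
      (X^(m+1-k) - X^(m+k+2)))
      = Polynomial.C (1 + y^(2*m+2)) * (X * MR y m) := by
    rw [Finset.sum_range_succ]
    rw [cf_eq_zero y (le_refl (m+1))]
    simp only [mul_zero, map_zero, zero_mul, add_zero]
    rw [MR, Finset.mul_sum, Finset.mul_sum]
    refine Finset.sum_congr rfl fun k hk => ?_
    have hkm : k ≤ m := Nat.lt_succ_iff.mp (Finset.mem_range.mp hk)
    rw [show m+1-k = (m-k)+1 from by omega, pow_succ,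
      show m+k+2 = (m+k+1)+1 from rfl, pow_succ]
    simp only [map_mul]
    ring
  -- S2
  set U : Polynomial A := ∑ k ∈ range (m+1),
    Polynomial.C (sgn y k * cf y m k) * (X^(m-k) - X^(m+k+3)) with hU
  have hS2 : (∑ k ∈ range (m+2), Polynomial.C (sgn y k * (y^(m+1-k) * cf y m (k-1))) *
      (X^(m+1-k) - X^(m+k+2)))
      = Polynomial.C (q1 * cf y m 0) * (X^(m+1) - X^(m+2)) - Polynomial.C q1 * U := by
    rw [Finset.sum_range_succ']
    have h0 : Polynomial.C (sgn y 0 * (y^(m+1-0) * cf y m (0-1))) * (X^(m+1-0) - X^(m+0+2))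
        = Polynomial.C (q1 * cf y m 0) * (X^(m+1) - X^(m+2)) := by
      rw [sgn_zero, one_mul, show m+1-0 = m+1 from rfl, show (0:ℕ)-1 = 0 from rfl,
        show m+0+2 = m+2 from rfl, ← hq1]
    rw [h0]
    have hrest : (∑ k ∈ range (m+1),
        Polynomial.C (sgn y (k+1) * (y^(m+1-(k+1)) * cf y m (k+1-1))) *
          (X^(m+1-(k+1)) - X^(m+(k+1)+2)))
        = -(Polynomial.C q1 * U) := by
      rw [hU, Finset.mul_sum, ← Finset.sum_neg_distrib]
      refine Finset.sum_congr rfl fun k hk => ?_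
      have hkm : k ≤ m := Nat.lt_succ_iff.mp (Finset.mem_range.mp hk)
      rw [show m+1-(k+1) = m-k from by omega, show k+1-1 = k from rfl,
        show m+(k+1)+2 = m+k+3 from by omega, sgn_succ]
      have hpow : y^(k+1) * y^(m-k) = q1 := by
        rw [← pow_add, show k+1+(m-k) = m+1 from by omega]
      calc Polynomial.C (-(y^(k+1)) * sgn y k * (y^(m-k) * cf y m k)) * (X^(m-k) - X^(m+k+3))
          = -(Polynomial.C (y^(k+1) * y^(m-k)) * (Polynomial.C (sgn y k * cf y m k)
              * (X^(m-k) - X^(m+k+3)))) := by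
            simp only [map_mul, map_neg]; ring
        _ = -(Polynomial.C q1 * (Polynomial.C (sgn y k * cf y m k)
              * (X^(m-k) - X^(m+k+3)))) := by rw [hpow]
    rw [hrest]; ring
  -- S3
  set V : Polynomial A := ∑ k ∈ range (m+1),
    Polynomial.C (sgn y k * cf y m k) * (X^(m+2-k) - X^(m+k+1)) with hV
  have hS3 : (∑ k ∈ range (m+2), Polynomial.C (sgn y k * (y^(m+k+2) * cf y m (k+1))) *
      (X^(m+1-k) - X^(m+k+2)))
      = -(Polynomial.C q1 * V) + Polynomial.C (q1 * cf y m 0) * (X^(m+2) - X^(m+1)) := by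
    have htop1 : Polynomial.C (sgn y (m+1) * (y^(m+(m+1)+2) * cf y m (m+1+1))) *
        (X^(m+1-(m+1)) - X^(m+(m+1)+2)) = 0 := by
      rw [cf_eq_zero y (show m+1 ≤ m+1+1 from by omega)]
      simp
    have htop0 : Polynomial.C (sgn y m * (y^(m+m+2) * cf y m (m+1))) *
        (X^(m+1-m) - X^(m+m+2)) = 0 := by
      rw [cf_eq_zero y (le_refl (m+1))]
      simp
    rw [Finset.sum_range_succ, htop1, add_zero, Finset.sum_range_succ, htop0, add_zero]
    have hVsplit : -(Polynomial.C q1 * V) = (∑ k ∈ range m,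
        -(Polynomial.C q1 * (Polynomial.C (sgn y (k+1) * cf y m (k+1)) *
          (X^(m+2-(k+1)) - X^(m+(k+1)+1)))))
        + -(Polynomial.C q1 * (Polynomial.C (sgn y 0 * cf y m 0) * (X^(m+2-0) - X^(m+0+1)))) := by
      rw [hV, Finset.mul_sum, ← Finset.sum_neg_distrib,
        Finset.sum_range_succ' (fun j => -(Polynomial.C q1 * (Polynomial.C (sgn y j * cf y m j) *
          (X^(m+2-j) - X^(m+j+1))))) m]
    rw [hVsplit]
    have hbound : -(Polynomial.C q1 * (Polynomial.C (sgn y 0 * cf y m 0) *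
        (X^(m+2-0) - X^(m+0+1)))) = - (Polynomial.C (q1 * cf y m 0) * (X^(m+2) - X^(m+1))) := by
      rw [sgn_zero, one_mul, show m+2-0 = m+2 from rfl, show m+0+1 = m+1 from rfl, map_mul]
      ring
    rw [hbound]
    have hsum : (∑ k ∈ range m, Polynomial.C (sgn y k * (y^(m+k+2) * cf y m (k+1))) *
        (X^(m+1-k) - X^(m+k+2)))
        = (∑ k ∈ range m, -(Polynomial.C q1 * (Polynomial.C (sgn y (k+1) * cf y m (k+1)) *
          (X^(m+2-(k+1)) - X^(m+(k+1)+1))))) := by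
      refine Finset.sum_congr rfl fun k hk => ?_
      have hkm : k < m := Finset.mem_range.mp hk
      rw [show m+2-(k+1) = m+1-k from by omega, show m+(k+1)+1 = m+k+2 from rfl, sgn_succ]
      have hpow : q1 * y^(k+1) = y^(m+k+2) := by
        rw [hq1, ← pow_add]; congr 1; omega
      calc Polynomial.C (sgn y k * (y^(m+k+2) * cf y m (k+1))) * (X^(m+1-k) - X^(m+k+2))
          = Polynomial.C (q1 * y^(k+1)) * (Polynomial.C (sgn y k * cf y m (k+1)) *
              (X^(m+1-k) - X^(m+k+2))) := by
            rw [hpow]; simp only [map_mul]; ring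
        _ = -(Polynomial.C q1 * (Polynomial.C (-(y^(k+1)) * sgn y k * cf y m (k+1)) *
              (X^(m+1-k) - X^(m+k+2)))) := by
            simp only [map_mul, map_neg]; ring
    rw [hsum]
    ring
  rw [key, hS1, hS2, hS3]
  have hUV : U + V = MR y m + X^2 * MR y m := by
    rw [hU, hV, MR, Finset.mul_sum, ← Finset.sum_add_distrib, ← Finset.sum_add_distrib]
    refine Finset.sum_congr rfl fun k hk => ?_
    have hkm : k ≤ m := Nat.lt_succ_iff.mp (Finset.mem_range.mp hk)
    rw [show m+2-k = (m-k)+2 from by omega, show m+k+3 = (m+k+1)+2 from rfl,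
      pow_add, pow_add]
    ring
  have hY : y^(2*m+2) = q1^2 := by
    rw [hq1, ← pow_mul]; congr 1; omega
  rw [hY]
  simp only [map_add, map_sub, map_one, map_mul, map_pow]
  linear_combination (-((1 - Polynomial.C q1) * Polynomial.C q1)) * hUV

theorem masterM (y : A) (m : ℕ) :
    (∏ i ∈ Ico 1 (m+1), Polynomial.C (1 - y^i)) * ((1 - Polynomial.X) *
      ∏ i ∈ Ico 1 (m+1), ((1 - Polynomial.C (y^i) * Polynomial.X) *
        (Polynomial.X - Polynomial.C (y^i)))) = MR y m := by
  induction m with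
  | zero =>
    simp only [Finset.Ico_self, Finset.prod_empty, one_mul, mul_one]
    rw [MR]
    simp [cf, sgn, tri]
  | succ m ih =>
    rw [Finset.prod_Ico_succ_top (by omega : 1 ≤ m+1),
      Finset.prod_Ico_succ_top (by omega : 1 ≤ m+1), MR_succ, ← ih]
    ring

noncomputable def NR (y : A) (m : ℕ) : Polynomial A :=
  ∑ k ∈ range (m+1), Polynomial.C (sgn y k * cf y m k) *
    ((Polynomial.X : Polynomial A)^(m-k) * ∑ i ∈ range (2*k+1), (Polynomial.X : Polynomial A)^i)

lemma MR_eq_NR (y : A) (m : ℕ) : MR y m = (1 - Polynomial.X) * NR y m := by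
  rw [MR, NR, Finset.mul_sum]
  refine Finset.sum_congr rfl fun k hk => ?_
  have hkm : k ≤ m := Nat.lt_succ_iff.mp (Finset.mem_range.mp hk)
  have geo : (1 - Polynomial.X) * (∑ i ∈ range (2*k+1), (Polynomial.X : Polynomial A)^i)
      = 1 - Polynomial.X^(2*k+1) := by
    have h := geom_sum_mul (Polynomial.X : Polynomial A) (2*k+1)
    linear_combination -h
  have hpow : (Polynomial.X : Polynomial A)^(m-k) * Polynomial.X^(2*k+1)
      = Polynomial.X^(m+k+1) := by
    rw [← pow_add]; congr 1; omega
  calc Polynomial.C (sgn y k * cf y m k) *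
        ((Polynomial.X : Polynomial A)^(m-k) - Polynomial.X^(m+k+1))
      = Polynomial.C (sgn y k * cf y m k) *
        ((Polynomial.X : Polynomial A)^(m-k) * (1 - Polynomial.X^(2*k+1))) := by
        rw [← hpow]; ring
    _ = (1 - Polynomial.X) * (Polynomial.C (sgn y k * cf y m k) *
        ((Polynomial.X : Polynomial A)^(m-k) * ∑ i ∈ range (2*k+1), (Polynomial.X:Polynomial A)^i)) := by
        rw [← geo]; ring

theorem jacobiQ [IsDomain A] (y : A) (m : ℕ) :
    (∏ i ∈ Ico 1 (m+1), Polynomial.C (1 - y^i)) *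
      (∏ i ∈ Ico 1 (m+1), ((1 - Polynomial.C (y^i) * Polynomial.X) *
        (Polynomial.X - Polynomial.C (y^i)))) = NR y m := by
  have h1x : (1 - Polynomial.X : Polynomial A) ≠ 0 := by
    intro h
    have := congrArg (fun p => Polynomial.coeff p 1) h
    simp [Polynomial.coeff_one] at this
  apply mul_left_cancel₀ h1x
  calc (1 - Polynomial.X) * ((∏ i ∈ Ico 1 (m+1), Polynomial.C (1 - y^i)) *
        (∏ i ∈ Ico 1 (m+1), ((1 - Polynomial.C (y^i) * Polynomial.X) *
          (Polynomial.X - Polynomial.C (y^i)))))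
      = (∏ i ∈ Ico 1 (m+1), Polynomial.C (1 - y^i)) * ((1 - Polynomial.X) *
        ∏ i ∈ Ico 1 (m+1), ((1 - Polynomial.C (y^i) * Polynomial.X) *
          (Polynomial.X - Polynomial.C (y^i)))) := by ring
    _ = MR y m := masterM y m
    _ = (1 - Polynomial.X) * NR y m := MR_eq_NR y m

theorem jacobiJ [IsDomain A] (y : A) (m : ℕ) :
    (∏ i ∈ Ico 1 (m+1), (1 - y^i))^3
      = ∑ k ∈ range (m+1), sgn y k * cf y m k * (2*k+1 : ℕ) := by
  have h := congrArg (Polynomial.eval 1) (jacobiQ y m)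
  simp only [Polynomial.eval_mul, Polynomial.eval_prod, Polynomial.eval_sub,
    Polynomial.eval_one, Polynomial.eval_C, Polynomial.eval_X, Polynomial.eval_pow,
    Polynomial.eval_finset_sum, one_pow, mul_one, NR] at h
  rw [← Finset.prod_mul_distrib] at h
  calc (∏ i ∈ Ico 1 (m+1), (1 - y^i))^3
      = ∏ i ∈ Ico 1 (m+1), ((1 - y^i) * ((1 - y^i) * (1 - y^i))) := by
        rw [← Finset.prod_pow]
        refine Finset.prod_congr rfl fun i _ => by ring
    _ = ∑ k ∈ range (m+1), sgn y k * cf y m k * (2*k+1 : ℕ) := by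
        rw [h]
        refine Finset.sum_congr rfl fun k hk => ?_
        simp [Finset.sum_const, Finset.card_range]

/-! ## power series truncation machinery -/

section PS

variable (R : Type*) [CommRing R]

noncomputable def PP (κ M : ℕ) : PowerSeries R :=
  ∏ n ∈ range M, (1 - (X : R⟦X⟧)^(κ*(n+1)))

variable {R}

lemma coeff_PP_stable {κ : ℕ} (hκ : 1 ≤ κ) {N M M' : ℕ} (h : N < M) (h' : M ≤ M') :
    coeff (R := R) N (PP R κ M') = coeff (R := R) N (PP R κ M) := by
  induction M', h' using Nat.le_induction with
  | base => rfl
  | succ M' hMM' ih =>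
    rw [PP, Finset.prod_range_succ, ← PP]
    rw [mul_sub, mul_one, map_sub, PowerSeries.coeff_mul_X_pow']
    have hbig : ¬ (κ*(M'+1) ≤ N) := by
      have : M'+1 ≤ κ*(M'+1) := Nat.le_mul_of_pos_left _ (by omega)
      omega
    rw [if_neg hbig, sub_zero, ih]

lemma coeff_PP_stable' {κ : ℕ} (hκ : 1 ≤ κ) {N M M' : ℕ} (h : N < M) (h' : N < M') :
    coeff (R := R) N (PP R κ M) = coeff (R := R) N (PP R κ M') := by
  rcases le_total M M' with hle | hle
  · exact (coeff_PP_stable hκ h hle).symm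
  · exact coeff_PP_stable hκ h' hle

lemma coeff_E_eq {κ : ℕ} (hκ : 1 ≤ κ) {N M : ℕ} (h : N < M) :
    coeff (R := ℤ) N (E κ) = coeff (R := ℤ) N (PP ℤ κ M) := by
  have h1 : coeff (R := ℤ) N (E κ) = coeff (R := ℤ) N (PP ℤ κ (N+1)) := by
    rw [E, coeff_mk, PP]
  rw [h1]
  exact coeff_PP_stable' hκ (Nat.lt_succ_self N) h

lemma X_pow_dvd_E_sub {κ : ℕ} (hκ : 1 ≤ κ) (M : ℕ) :
    (X : ℤ⟦X⟧)^M ∣ E κ - PP ℤ κ M := by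
  rw [PowerSeries.X_pow_dvd_iff]
  intro m hm
  rw [map_sub, coeff_E_eq hκ hm, sub_self]

lemma coeff_PP_not_dvd {κ : ℕ} (M : ℕ) : ∀ {n : ℕ}, ¬ κ ∣ n → coeff (R := R) n (PP R κ M) = 0 := by
  induction M with
  | zero =>
    intro n h
    rw [PP, Finset.prod_range_zero, PowerSeries.coeff_one, if_neg]
    intro h0; exact h (h0 ▸ dvd_zero κ)
  | succ M ih =>
    intro n h
    rw [PP, Finset.prod_range_succ, ← PP, mul_sub, mul_one, map_sub, ih h,
      PowerSeries.coeff_mul_X_pow', zero_sub, neg_eq_zero]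
    split
    · next hle =>
      apply ih
      intro hd
      exact h (by
        have heq : n - κ*(M+1) + κ*(M+1) = n := by omega
        rw [← heq]; exact Nat.dvd_add hd ⟨M+1, rfl⟩)
    · rfl

lemma coeff_E_not_dvd {κ n : ℕ} (hκ : 1 ≤ κ) (h : ¬ κ ∣ n) : coeff (R := ℤ) n (E κ) = 0 := by
  rw [coeff_E_eq hκ (Nat.lt_succ_self n)]
  exact coeff_PP_not_dvd _ h

/-! ## divisibility helpers -/

lemma dvd_sub_mul {d a b c e : R} (h1 : d ∣ a - b) (h2 : d ∣ c - e) : d ∣ a*c - b*e := by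
  have : a*c - b*e = (a-b)*c + b*(c-e) := by ring
  rw [this]
  exact dvd_add (h1.mul_right c) (h2.mul_left b)

lemma dvd_sub_pow {d a b : R} (h : d ∣ a - b) (n : ℕ) : d ∣ a^n - b^n := by
  induction n with
  | zero => simp
  | succ n ih =>
    rw [pow_succ, pow_succ]
    exact dvd_sub_mul ih h

lemma prod_sub_one_dvd {ι : Type*} {s : Finset ι} {f : ι → R} {d : R}
    (h : ∀ i ∈ s, d ∣ f i - 1) : d ∣ (∏ i ∈ s, f i) - 1 := by
  classical
  induction s using Finset.induction with
  | empty => simp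
  | insert a s hnotmem ih =>
    rw [Finset.prod_insert hnotmem]
    have : f a * ∏ i ∈ s, f i - 1 = (f a - 1) * (∏ i ∈ s, f i) + ((∏ i ∈ s, f i) - 1) := by
      ring
    rw [this]
    exact dvd_add ((h a (Finset.mem_insert_self a s)).mul_right _)
      (ih fun i hi => h i (Finset.mem_insert_of_mem hi))

lemma cf_sub_one {κ m k : ℕ} (hk : k ≤ m+1) :
    (X : R⟦X⟧)^(κ*(m+1-k)) ∣ cf ((X : R⟦X⟧)^κ) m k - 1 := by
  rw [cf]
  set P1 : R⟦X⟧ := ∏ i ∈ Ico (m+1-k) (m+1), (1 - ((X:R⟦X⟧)^κ)^i) with hP1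
  set P2 : R⟦X⟧ := ∏ i ∈ Ico (m+k+2) (2*m+2), (1 - ((X:R⟦X⟧)^κ)^i) with hP2
  have key : ∀ (a b : ℕ), (∀ i ∈ Ico a b, m+1-k ≤ i) →
      (X : R⟦X⟧)^(κ*(m+1-k)) ∣ (∏ i ∈ Ico a b, (1 - ((X:R⟦X⟧)^κ)^i)) - 1 := by
    intro a b hab
    apply prod_sub_one_dvd
    intro i hi
    have : (1 : R⟦X⟧) - ((X:R⟦X⟧)^κ)^i - 1 = -(X^(κ*i)) := by
      rw [← pow_mul]; ring
    rw [this]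
    exact (pow_dvd_pow _ (Nat.mul_le_mul_left κ (hab i hi))).neg_right
  have h1 : (X : R⟦X⟧)^(κ*(m+1-k)) ∣ P1 - 1 :=
    key _ _ fun i hi => (Finset.mem_Ico.mp hi).1
  have h2 : (X : R⟦X⟧)^(κ*(m+1-k)) ∣ P2 - 1 :=
    key _ _ fun i hi => le_trans (by omega) (Finset.mem_Ico.mp hi).1
  have : P1 * P2 - 1 = (P1 - 1) * P2 + (P2 - 1) := by ring
  rw [this]
  exact dvd_add (h1.mul_right _) h2

lemma PP_eq_prod_Ico (κ M : ℕ) :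
    (∏ i ∈ Ico 1 (M+1), (1 - ((X:R⟦X⟧)^κ)^i)) = PP R κ M := by
  rw [Finset.prod_Ico_eq_prod_range, PP]
  simp only [Nat.add_sub_cancel]
  refine Finset.prod_congr rfl fun i _ => ?_
  rw [← pow_mul]
  congr 2
  ring

/-! ## coefficients of E κ ^ 3 -/

lemma coeff_eq_of_X_pow_dvd {f g : R⟦X⟧} {M n : ℕ} (h : (X:R⟦X⟧)^M ∣ f - g) (hn : n < M) :
    coeff (R := R) n f = coeff (R := R) n g := by
  rw [PowerSeries.X_pow_dvd_iff] at h
  have := h n hn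
  rw [map_sub, sub_eq_zero] at this
  exact this

lemma coeff_E_cube (κ : ℕ) (hκ : 1 ≤ κ) (N : ℕ) :
    coeff (R := ℤ) N ((E κ)^3)
      = ∑ k ∈ range (N+2), (if N = κ * tri k then ((-1)^k * (2*k+1) : ℤ) else 0) := by
  have h3 : coeff (R := ℤ) N ((E κ)^3) = coeff (R := ℤ) N ((PP ℤ κ (N+1))^3) :=
    coeff_eq_of_X_pow_dvd (dvd_sub_pow (X_pow_dvd_E_sub hκ (N+1)) 3) (Nat.lt_succ_self N)
  have hJ := jacobiJ ((X:ℤ⟦X⟧)^κ) (N+1)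
  rw [PP_eq_prod_Ico] at hJ
  rw [h3, hJ, map_sum]
  refine Finset.sum_congr rfl fun k hk => ?_
  have hkN : k ≤ N+1 := Nat.lt_succ_iff.mp (Finset.mem_range.mp hk)
  -- rewrite the term
  have hterm : sgn ((X:ℤ⟦X⟧)^κ) k * cf ((X:ℤ⟦X⟧)^κ) (N+1) k * ((2*k+1 : ℕ) : ℤ⟦X⟧)
      = C (R := ℤ) ((-1)^k * (2*k+1)) * ((X:ℤ⟦X⟧)^(κ * tri k) * cf ((X:ℤ⟦X⟧)^κ) (N+1) k) := by
    rw [sgn, ← pow_mul]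
    have hc : ((2*k+1 : ℕ) : ℤ⟦X⟧) = C (R := ℤ) ((2*k+1 : ℕ) : ℤ) := by
      simp [map_natCast]
    have hneg : ((-1 : ℤ⟦X⟧))^k = C (R := ℤ) ((-1)^k) := by
      simp [map_pow]
    rw [hc, hneg, map_mul]
    push_cast
    ring
  rw [hterm, PowerSeries.coeff_C_mul]
  have hsplit : (X:ℤ⟦X⟧)^(κ * tri k) * cf ((X:ℤ⟦X⟧)^κ) (N+1) k
      = (X:ℤ⟦X⟧)^(κ * tri k)
        + (X:ℤ⟦X⟧)^(κ * tri k) * (cf ((X:ℤ⟦X⟧)^κ) (N+1) k - 1) := by ring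
  rw [hsplit, map_add]
  have hzero : coeff (R := ℤ) N ((X:ℤ⟦X⟧)^(κ * tri k) * (cf ((X:ℤ⟦X⟧)^κ) (N+1) k - 1)) = 0 := by
    have hdvd : (X:ℤ⟦X⟧)^(κ * tri k + κ*(N+2-k)) ∣
        (X:ℤ⟦X⟧)^(κ * tri k) * (cf ((X:ℤ⟦X⟧)^κ) (N+1) k - 1) := by
      rw [pow_add]
      exact mul_dvd_mul_left _ (by
        have := cf_sub_one (R := ℤ) (κ := κ) (m := N+1) (k := k) (by omega)
        simpa [show (N+1)+1-k = N+2-k from by omega] using this)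
    have hNlt : N < κ * tri k + κ*(N+2-k) := by
      have h1 : tri k ≤ κ * tri k := Nat.le_mul_of_pos_left _ (by omega)
      have h2 : N+2-k ≤ κ*(N+2-k) := Nat.le_mul_of_pos_left _ (by omega)
      have h3 : k ≤ tri k := le_tri k
      omega
    have := coeff_eq_of_X_pow_dvd (f := (X:ℤ⟦X⟧)^(κ * tri k) *
      (cf ((X:ℤ⟦X⟧)^κ) (N+1) k - 1)) (g := 0) (by simpa using hdvd) hNlt
    simpa using this
  rw [hzero, add_zero, PowerSeries.coeff_X_pow]
  split <;> simp

end PS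

lemma coeff_E_cube_tri (κ : ℕ) (hκ : 1 ≤ κ) (j : ℕ) :
    coeff (R := ℤ) (κ * tri j) ((E κ)^3) = (-1)^j * (2*j+1) := by
  rw [coeff_E_cube κ hκ]
  have hj : j ∈ range (κ * tri j + 2) := by
    rw [Finset.mem_range]
    have h1 : tri j ≤ κ * tri j := Nat.le_mul_of_pos_left _ (by omega)
    have := le_tri j
    omega
  rw [Finset.sum_eq_single j]
  · rw [if_pos rfl]
  · intro k _ hkj
    rw [if_neg]
    intro h
    exact hkj (tri_strictMono.injective (Nat.eq_of_mul_eq_mul_left (by omega) h.symm))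
  · intro h; exact absurd hj h
lemma coeff_E_cube_zero (κ : ℕ) (hκ : 1 ≤ κ) {N : ℕ} (h : ∀ j, κ * tri j ≠ N) :
    coeff (R := ℤ) N ((E κ)^3) = 0 := by
  rw [coeff_E_cube κ hκ]
  refine Finset.sum_eq_zero fun k _ => ?_
  rw [if_neg fun hc => h k hc.symm]

/-! ## numeric facts about triangular numbers mod 3 -/

lemma tri_decomp (j : ℕ) : ∃ t, 2 * tri j = 3*t + (j % 3) * (j % 3 + 1) := by
  refine ⟨3*(j/3)*(j/3) + 2*(j%3)*(j/3) + (j/3), ?_⟩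
  rw [two_tri]
  have hj : j = 3*(j/3) + j%3 := by omega
  set s := j/3; set r := j%3
  calc j * (j+1) = (3*s + r) * ((3*s + r) + 1) := by rw [← hj]
    _ = 3*(3*s*s + 2*r*s + s) + r * (r+1) := by ring

lemma tri_ne_of_mod2 {n j : ℕ} (h : n % 3 = 2) : tri j ≠ n := by
  intro he
  obtain ⟨t, h2⟩ := tri_decomp j
  have hr : j % 3 = 0 ∨ j % 3 = 1 ∨ j % 3 = 2 := by omega
  rcases hr with hr | hr | hr <;> rw [hr] at h2 <;> norm_num at h2 <;> omega

lemma tri_eq_mod1 {n j : ℕ} (h : n % 3 = 1) (he : tri j = n) : j % 3 = 1 := by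
  obtain ⟨t, h2⟩ := tri_decomp j
  have hr : j % 3 = 0 ∨ j % 3 = 1 ∨ j % 3 = 2 := by omega
  rcases hr with hr | hr | hr <;> rw [hr] at h2 <;> norm_num at h2 <;> omega

lemma tri_3s1 (s : ℕ) : tri (3*s+1) = 9 * tri s + 1 := by
  have h1 := two_tri (3*s+1)
  have h2 := two_tri s
  have : (3*s+1) * ((3*s+1)+1) = 9 * (s * (s+1)) + 2 := by ring
  omega

/-! ## the key dissection: E1³ + 3 q E9³ is supported on exponents ≡ 0 mod 3 -/

lemma coeff_A_eq_zero {n : ℕ} (h : ¬ (3 ∣ n)) :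
    coeff (R := ℤ) n ((E 1)^3 + 3 * X * (E 9)^3) = 0 := by
  have hn0 : n ≠ 0 := fun h0 => h (h0 ▸ dvd_zero 3)
  obtain ⟨n', rfl⟩ : ∃ n', n = n'+1 := ⟨n-1, by omega⟩
  rw [map_add]
  have hc3 : (3 : ℤ⟦X⟧) = C (R := ℤ) 3 := by simp
  have hcoeff2 : coeff (R := ℤ) (n'+1) ((3:ℤ⟦X⟧) * X * (E 9)^3) = 3 * coeff (R := ℤ) n' ((E 9)^3) := by
    rw [mul_assoc, hc3, PowerSeries.coeff_C_mul, PowerSeries.coeff_succ_X_mul]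
  rw [hcoeff2]
  have hmod : (n'+1) % 3 = 1 ∨ (n'+1) % 3 = 2 := by omega
  rcases hmod with hm | hm
  · -- n ≡ 1 (mod 3)
    by_cases hex : ∃ s, 9 * tri s = n'
    · obtain ⟨s, hs⟩ := hex
      have he1 : coeff (R := ℤ) (n'+1) ((E 1)^3) = (-1)^(3*s+1) * (2*(3*s+1)+1) := by
        have htri : 1 * tri (3*s+1) = n'+1 := by
          rw [one_mul, tri_3s1]; omega
        rw [← htri]
        exact coeff_E_cube_tri 1 le_rfl (3*s+1)
      have he9 : coeff (R := ℤ) n' ((E 9)^3) = (-1)^s * (2*s+1) := by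
        rw [← hs]
        exact coeff_E_cube_tri 9 (by norm_num) s
      rw [he1, he9]
      have hsgn : (-1:ℤ)^(3*s+1) = -((-1)^s) := by
        rw [pow_add, pow_mul]
        norm_num
      rw [hsgn]
      push_cast
      ring
    · have he9 : coeff (R := ℤ) n' ((E 9)^3) = 0 := by
        refine coeff_E_cube_zero 9 (by norm_num) fun j hj => hex ⟨j, hj⟩
      have he1 : coeff (R := ℤ) (n'+1) ((E 1)^3) = 0 := by
        refine coeff_E_cube_zero 1 le_rfl fun j hj => ?_
        rw [one_mul] at hj
        have hj3 : j % 3 = 1 := tri_eq_mod1 hm hj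
        obtain ⟨s, rfl⟩ : ∃ s, j = 3*s+1 := ⟨j/3, by omega⟩
        rw [tri_3s1] at hj
        exact hex ⟨s, by omega⟩
      rw [he1, he9]
      ring
  · -- n ≡ 2 (mod 3)
    have he1 : coeff (R := ℤ) (n'+1) ((E 1)^3) = 0 := by
      refine coeff_E_cube_zero 1 le_rfl fun j hj => ?_
      rw [one_mul] at hj
      exact tri_ne_of_mod2 hm hj
    have he9 : coeff (R := ℤ) n' ((E 9)^3) = 0 := by
      refine coeff_E_cube_zero 9 (by norm_num) fun j hj => ?_
      omega
    rw [he1, he9]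
    ring

variable {R : Type*} [CommRing R]

/-! ## omega -/

noncomputable def ω : ℂ := (-1 + (Real.sqrt 3 : ℂ) * Complex.I) / 2

lemma omega_rel : 1 + ω + ω^2 = 0 := by
  have hs : ((Real.sqrt 3 : ℝ) : ℂ)^2 = 3 := by
    rw [← Complex.ofReal_pow, Real.sq_sqrt (by norm_num : (0:ℝ) ≤ 3)]
    norm_num
  have hI := Complex.I_sq
  unfold ω
  linear_combination (Complex.I^2/4) * hs + (3/4) * hI

lemma omega_cube : ω^3 = 1 := by
  linear_combination (ω - 1) * omega_rel

/-! ## the triple product over cube roots of unity -/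

lemma C_omega_rel : (1 : ℂ⟦X⟧) + C (R := ℂ) ω + (C (R := ℂ) ω)^2 = 0 := by
  have := congrArg (C (R := ℂ)) omega_rel
  simpa [map_add, map_pow, map_one] using this

lemma C_omega_cube : (C (R := ℂ) ω)^3 = 1 := by
  have := congrArg (C (R := ℂ)) omega_cube
  simpa [map_pow, map_one] using this

lemma triple_prod (Z : ℂ⟦X⟧) :
    (1 - Z) * ((1 - C (R := ℂ) ω * Z) * (1 - C (R := ℂ) (ω^2) * Z)) = 1 - Z^3 := by
  rw [map_pow]
  linear_combination (-Z + (C (R := ℂ) ω)*Z^2) * C_omega_rel + (-(Z^3)) * C_omega_cube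

/-! ## rescale facts -/

lemma rescale_X_pow (a : ℂ) (j : ℕ) :
    rescale a ((X : ℂ⟦X⟧)^j) = C (R := ℂ) (a^j) * X^j := by
  rw [map_pow, rescale_X, mul_pow, ← map_pow]

lemma rescale_one_sub_X_pow (a : ℂ) (j : ℕ) :
    rescale a (1 - (X : ℂ⟦X⟧)^j) = 1 - C (R := ℂ) (a^j) * X^j := by
  rw [map_sub, map_one, rescale_X_pow]

lemma rescale_dvd_sub {a : ℂ} {f g : ℂ⟦X⟧} {t : ℕ} (h : (X:ℂ⟦X⟧)^t ∣ f - g) :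
    (X:ℂ⟦X⟧)^t ∣ rescale a f - rescale a g := by
  obtain ⟨h', hh⟩ := h
  refine ⟨C (R := ℂ) (a^t) * rescale a h', ?_⟩
  have : rescale a f - rescale a g = rescale a (f - g) := (map_sub _ _ _).symm
  rw [this, hh, map_mul, rescale_X_pow]
  ring

/-! ## PP manipulation -/

lemma PP_add3 (κ M : ℕ) : PP R κ (M+3) = PP R κ M *
    ((1 - (X:R⟦X⟧)^(κ*(M+1))) * ((1 - (X:R⟦X⟧)^(κ*(M+2))) * (1 - (X:R⟦X⟧)^(κ*(M+3))))) := by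
  rw [PP, show M+3 = (M+2)+1 from rfl, Finset.prod_range_succ,
    show M+2 = (M+1)+1 from rfl, Finset.prod_range_succ, Finset.prod_range_succ, ← PP,
    show M+1+1 = M+2 from rfl, show M+1+1+1 = M+3 from rfl]
  ring

lemma rescale_PP1 (a : ℂ) (M : ℕ) :
    rescale a (PP ℂ 1 M) = ∏ n ∈ range M, (1 - C (R := ℂ) (a^(n+1)) * (X:ℂ⟦X⟧)^(n+1)) := by
  rw [PP, map_prod]
  refine Finset.prod_congr rfl fun n _ => ?_
  rw [one_mul, rescale_one_sub_X_pow]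

/-! ## the finite cube-root product identity -/

lemma omega_pow_3t1 (t : ℕ) : ω^(3*t+1) = ω := by
  rw [pow_add, pow_mul, omega_cube, one_pow, pow_one, one_mul]

lemma omega_pow_3t2 (t : ℕ) : ω^(3*t+2) = ω^2 := by
  rw [pow_add, pow_mul, omega_cube, one_pow, one_mul]

lemma omega_pow_3t3 (t : ℕ) : ω^(3*t+3) = 1 := by
  rw [show 3*t+3 = 3*(t+1) from by ring, pow_mul, omega_cube, one_pow]

lemma PP_add1 (κ M : ℕ) : PP R κ (M+1) = PP R κ M * (1 - (X:R⟦X⟧)^(κ*(M+1))) := by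
  rw [PP, Finset.prod_range_succ, ← PP]

lemma omega2_pow_3t1 (t : ℕ) : (ω^2)^(3*t+1) = ω^2 := by
  rw [← pow_mul, show 2*(3*t+1) = 3*(2*t)+2 from by ring, omega_pow_3t2]

lemma omega2_pow_3t2 (t : ℕ) : (ω^2)^(3*t+2) = ω := by
  rw [← pow_mul, show 2*(3*t+2) = 3*(2*t+1)+1 from by ring, omega_pow_3t1]

lemma omega2_pow_3t3 (t : ℕ) : (ω^2)^(3*t+3) = 1 := by
  rw [← pow_mul, show 2*(3*t+3) = 3*(2*t+1)+3 from by ring, omega_pow_3t3]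

lemma L1fin (t : ℕ) :
    PP ℂ 1 (3*t) * rescale ω (PP ℂ 1 (3*t)) * rescale (ω^2) (PP ℂ 1 (3*t)) * PP ℂ 9 t
      = PP ℂ 3 (3*t) * (PP ℂ 3 t)^3 := by
  induction t with
  | zero => simp [PP]
  | succ t ih =>
    have h3t : 3*(t+1) = (3*t)+3 := by ring
    -- expansions of the six pieces
    have ha : PP ℂ 1 (3*(t+1)) = PP ℂ 1 (3*t) *
        ((1 - (X:ℂ⟦X⟧)^(3*t+1)) * ((1 - (X:ℂ⟦X⟧)^(3*t+2)) * (1 - (X:ℂ⟦X⟧)^(3*t+3)))) := by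
      rw [h3t, PP_add3]
      simp only [one_mul]
    have hb : rescale ω (PP ℂ 1 (3*(t+1))) = rescale ω (PP ℂ 1 (3*t)) *
        ((1 - C (R := ℂ) ω * (X:ℂ⟦X⟧)^(3*t+1)) * ((1 - C (R := ℂ) (ω^2) * (X:ℂ⟦X⟧)^(3*t+2)) *
          (1 - (X:ℂ⟦X⟧)^(3*t+3)))) := by
      rw [ha, map_mul, map_mul, map_mul, rescale_one_sub_X_pow, rescale_one_sub_X_pow,
        rescale_one_sub_X_pow, omega_pow_3t1, omega_pow_3t2, omega_pow_3t3, map_one, one_mul]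
    have hc : rescale (ω^2) (PP ℂ 1 (3*(t+1))) = rescale (ω^2) (PP ℂ 1 (3*t)) *
        ((1 - C (R := ℂ) (ω^2) * (X:ℂ⟦X⟧)^(3*t+1)) * ((1 - C (R := ℂ) ω * (X:ℂ⟦X⟧)^(3*t+2)) *
          (1 - (X:ℂ⟦X⟧)^(3*t+3)))) := by
      rw [ha, map_mul, map_mul, map_mul, rescale_one_sub_X_pow, rescale_one_sub_X_pow,
        rescale_one_sub_X_pow, omega2_pow_3t1, omega2_pow_3t2, omega2_pow_3t3, map_one, one_mul]
    have hd : PP ℂ 9 (t+1) = PP ℂ 9 t * (1 - (X:ℂ⟦X⟧)^(9*t+9)) := by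
      rw [PP_add1, show 9*(t+1) = 9*t+9 from by ring]
    have he : PP ℂ 3 (3*(t+1)) = PP ℂ 3 (3*t) *
        ((1 - (X:ℂ⟦X⟧)^(9*t+3)) * ((1 - (X:ℂ⟦X⟧)^(9*t+6)) * (1 - (X:ℂ⟦X⟧)^(9*t+9)))) := by
      rw [h3t, PP_add3, show 3*(3*t+1) = 9*t+3 from by ring,
        show 3*(3*t+2) = 9*t+6 from by ring, show 3*(3*t+3) = 9*t+9 from by ring]
    have hf : PP ℂ 3 (t+1) = PP ℂ 3 t * (1 - (X:ℂ⟦X⟧)^(3*t+3)) := by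
      rw [PP_add1, show 3*(t+1) = 3*t+3 from by ring]
    -- local triple identities
    have hp1 : ((X:ℂ⟦X⟧)^(3*t+1))^3 = (X:ℂ⟦X⟧)^(9*t+3) := by
      rw [← pow_mul]; congr 1; ring
    have hp2 : ((X:ℂ⟦X⟧)^(3*t+2))^3 = (X:ℂ⟦X⟧)^(9*t+6) := by
      rw [← pow_mul]; congr 1; ring
    have t1 : (1 - (X:ℂ⟦X⟧)^(3*t+1)) * ((1 - C (R := ℂ) ω * (X:ℂ⟦X⟧)^(3*t+1)) *
        (1 - C (R := ℂ) (ω^2) * (X:ℂ⟦X⟧)^(3*t+1))) = 1 - (X:ℂ⟦X⟧)^(9*t+3) := by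
      rw [← hp1]; exact triple_prod _
    have t2 : (1 - (X:ℂ⟦X⟧)^(3*t+2)) * ((1 - C (R := ℂ) ω * (X:ℂ⟦X⟧)^(3*t+2)) *
        (1 - C (R := ℂ) (ω^2) * (X:ℂ⟦X⟧)^(3*t+2))) = 1 - (X:ℂ⟦X⟧)^(9*t+6) := by
      rw [← hp2]; exact triple_prod _
    rw [hb, hc, ha, hd, he, hf]
    calc (PP ℂ 1 (3*t) * ((1 - (X:ℂ⟦X⟧)^(3*t+1)) * ((1 - X^(3*t+2)) * (1 - X^(3*t+3))))) *
          (rescale ω (PP ℂ 1 (3*t)) * ((1 - C (R := ℂ) ω * (X:ℂ⟦X⟧)^(3*t+1)) *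
            ((1 - C (R := ℂ) (ω^2) * X^(3*t+2)) * (1 - X^(3*t+3))))) *
          (rescale (ω^2) (PP ℂ 1 (3*t)) * ((1 - C (R := ℂ) (ω^2) * (X:ℂ⟦X⟧)^(3*t+1)) *
            ((1 - C (R := ℂ) ω * X^(3*t+2)) * (1 - X^(3*t+3))))) *
          (PP ℂ 9 t * (1 - X^(9*t+9)))
        = (PP ℂ 1 (3*t) * rescale ω (PP ℂ 1 (3*t)) * rescale (ω^2) (PP ℂ 1 (3*t)) * PP ℂ 9 t) *
          (((1 - (X:ℂ⟦X⟧)^(3*t+1)) * ((1 - C (R := ℂ) ω * (X:ℂ⟦X⟧)^(3*t+1)) *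
              (1 - C (R := ℂ) (ω^2) * (X:ℂ⟦X⟧)^(3*t+1)))) *
           ((1 - (X:ℂ⟦X⟧)^(3*t+2)) * ((1 - C (R := ℂ) ω * (X:ℂ⟦X⟧)^(3*t+2)) *
              (1 - C (R := ℂ) (ω^2) * (X:ℂ⟦X⟧)^(3*t+2)))) *
           (1 - X^(3*t+3))^3 * (1 - X^(9*t+9))) := by ring
      _ = (PP ℂ 3 (3*t) * (PP ℂ 3 t)^3) *
          ((1 - (X:ℂ⟦X⟧)^(9*t+3)) * (1 - (X:ℂ⟦X⟧)^(9*t+6)) * (1 - X^(3*t+3))^3 *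
            (1 - X^(9*t+9))) := by rw [ih, t1, t2]
      _ = PP ℂ 3 (3*t) * ((1 - (X:ℂ⟦X⟧)^(9*t+3)) * ((1 - X^(9*t+6)) * (1 - X^(9*t+9)))) *
          (PP ℂ 3 t * (1 - X^(3*t+3)))^3 := by ring

/-! ## the infinite product identity over ℂ -/

noncomputable def Em (κ : ℕ) : ℂ⟦X⟧ := PowerSeries.map (Int.castRingHom ℂ) (E κ)

lemma map_PP (κ M : ℕ) :
    PowerSeries.map (Int.castRingHom ℂ) (PP ℤ κ M) = PP ℂ κ M := by
  rw [PP, PP, map_prod]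
  refine Finset.prod_congr rfl fun n _ => ?_
  simp [map_sub, map_one, map_pow, PowerSeries.map_X]

lemma X_pow_dvd_Em_sub {κ : ℕ} (hκ : 1 ≤ κ) (M : ℕ) :
    (X : ℂ⟦X⟧)^M ∣ Em κ - PP ℂ κ M := by
  have h := map_dvd (PowerSeries.map (Int.castRingHom ℂ)) (X_pow_dvd_E_sub hκ M)
  simpa [map_sub, map_pow, PowerSeries.map_X, map_PP, Em] using h

lemma eq_of_forall_X_pow_dvd {f g : ℂ⟦X⟧} (h : ∀ t, (X:ℂ⟦X⟧)^t ∣ f - g) : f = g := by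
  ext n
  have := (PowerSeries.X_pow_dvd_iff.mp (h (n+1))) n (Nat.lt_succ_self n)
  rw [map_sub, sub_eq_zero] at this
  exact this

lemma L1 : Em 1 * rescale ω (Em 1) * rescale (ω^2) (Em 1) * Em 9 = (Em 3)^4 := by
  apply eq_of_forall_X_pow_dvd
  intro t
  have e1 : (X:ℂ⟦X⟧)^t ∣ Em 1 - PP ℂ 1 (3*t) :=
    dvd_trans (pow_dvd_pow X (by omega)) (X_pow_dvd_Em_sub le_rfl (3*t))
  have e1a : (X:ℂ⟦X⟧)^t ∣ rescale ω (Em 1) - rescale ω (PP ℂ 1 (3*t)) := rescale_dvd_sub e1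
  have e1b : (X:ℂ⟦X⟧)^t ∣ rescale (ω^2) (Em 1) - rescale (ω^2) (PP ℂ 1 (3*t)) :=
    rescale_dvd_sub e1
  have e9 : (X:ℂ⟦X⟧)^t ∣ Em 9 - PP ℂ 9 t := X_pow_dvd_Em_sub (by norm_num) t
  have e3a : (X:ℂ⟦X⟧)^t ∣ Em 3 - PP ℂ 3 (3*t) :=
    dvd_trans (pow_dvd_pow X (by omega)) (X_pow_dvd_Em_sub (by norm_num) (3*t))
  have e3b : (X:ℂ⟦X⟧)^t ∣ Em 3 - PP ℂ 3 t := X_pow_dvd_Em_sub (by norm_num) t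
  have hL : (X:ℂ⟦X⟧)^t ∣ (Em 1 * rescale ω (Em 1) * rescale (ω^2) (Em 1) * Em 9)
      - (PP ℂ 1 (3*t) * rescale ω (PP ℂ 1 (3*t)) * rescale (ω^2) (PP ℂ 1 (3*t)) * PP ℂ 9 t) :=
    dvd_sub_mul (dvd_sub_mul (dvd_sub_mul e1 e1a) e1b) e9
  have hR : (X:ℂ⟦X⟧)^t ∣ (Em 3)^4 - PP ℂ 3 (3*t) * (PP ℂ 3 t)^3 := by
    have h4 : (Em 3)^4 = Em 3 * (Em 3)^3 := by ring
    rw [h4]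
    exact dvd_sub_mul e3a (dvd_sub_pow e3b 3)
  have hkey : (Em 1 * rescale ω (Em 1) * rescale (ω^2) (Em 1) * Em 9) - (Em 3)^4
      = ((Em 1 * rescale ω (Em 1) * rescale (ω^2) (Em 1) * Em 9)
          - (PP ℂ 1 (3*t) * rescale ω (PP ℂ 1 (3*t)) * rescale (ω^2) (PP ℂ 1 (3*t)) * PP ℂ 9 t))
        - ((Em 3)^4 - PP ℂ 3 (3*t) * (PP ℂ 3 t)^3) := by
    rw [← L1fin t]; ring
  rw [hkey]
  exact dvd_sub hL hR

/-! ## rescale invariance -/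

lemma rescale_Em3 {a : ℂ} (ha : a^3 = 1) : rescale a (Em 3) = Em 3 := by
  ext n
  rw [coeff_rescale]
  by_cases h3 : 3 ∣ n
  · obtain ⟨l, rfl⟩ := h3
    rw [pow_mul, ha, one_pow, one_mul]
  · have h0 : coeff (R := ℤ) n (E 3) = 0 := coeff_E_not_dvd (by norm_num) h3
    rw [Em, PowerSeries.coeff_map, h0]
    simp

lemma rescale_Em9 {a : ℂ} (ha : a^3 = 1) : rescale a (Em 9) = Em 9 := by
  ext n
  rw [coeff_rescale]
  by_cases h9 : 9 ∣ n
  · obtain ⟨l, rfl⟩ := h9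
    rw [show 9*l = 3*(3*l) from by ring, pow_mul, ha, one_pow, one_mul]
  · have h0 : coeff (R := ℤ) n (E 9) = 0 := coeff_E_not_dvd (by norm_num) h9
    rw [Em, PowerSeries.coeff_map, h0]
    simp

lemma rescale_Aa {a : ℂ} (ha : a^3 = 1) :
    rescale a ((Em 1)^3 + 3 * X * (Em 9)^3) = (Em 1)^3 + 3 * X * (Em 9)^3 := by
  have hmapA : (Em 1)^3 + 3 * X * (Em 9)^3
      = PowerSeries.map (Int.castRingHom ℂ) ((E 1)^3 + 3 * X * (E 9)^3) := by
    simp [Em, map_add, map_mul, map_pow, PowerSeries.map_X, map_ofNat]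
  ext n
  rw [coeff_rescale]
  by_cases h3 : 3 ∣ n
  · obtain ⟨l, rfl⟩ := h3
    rw [pow_mul, ha, one_pow, one_mul]
  · have h0 : coeff (R := ℤ) n ((E 1)^3 + 3 * X * (E 9)^3) = 0 := coeff_A_eq_zero h3
    rw [hmapA, PowerSeries.coeff_map, h0]
    simp

lemma omega2_cube : (ω^2)^3 = 1 := by
  rw [← pow_mul, show 2*3 = 3*2 from rfl, pow_mul, omega_cube, one_pow]

/-! ## final assembly over ℂ -/

lemma main_complex :
    (Em 1)^9 * (Em 9)^3 + 9 * X * ((Em 1)^6 * (Em 9)^6)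
      + 27 * X^2 * ((Em 1)^3 * (Em 9)^9) = (Em 3)^12 := by
  set B : ℂ⟦X⟧ := 3 * X * (Em 9)^3 with hB
  set Aa : ℂ⟦X⟧ := (Em 1)^3 + B with hAa
  have hA1 : rescale ω Aa = Aa := rescale_Aa omega_cube
  have hA2 : rescale (ω^2) Aa = Aa := rescale_Aa omega2_cube
  have hcube : (Em 1)^3 = Aa - B := by rw [hAa]; ring
  have hρB : ∀ (a : ℂ), a^3 = 1 → rescale a B = C (R := ℂ) a * B := by
    intro a ha
    rw [hB, map_mul, map_mul, map_ofNat, map_pow, rescale_Em9 ha, rescale_X]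
    ring
  have hρ1 : (rescale ω (Em 1))^3 = Aa - C (R := ℂ) ω * B := by
    rw [← map_pow, hcube, map_sub, hA1, hρB ω omega_cube]
  have hρ2 : (rescale (ω^2) (Em 1))^3 = Aa - C (R := ℂ) (ω^2) * B := by
    rw [← map_pow, hcube, map_sub, hA2, hρB (ω^2) omega2_cube]
  have hprod : (Aa - B) * ((Aa - C (R := ℂ) ω * B) * (Aa - C (R := ℂ) (ω^2) * B)) = Aa^3 - B^3 := by
    rw [map_pow]
    linear_combination (-(Aa^2*B) + (C (R := ℂ) ω) * Aa * B^2) * C_omega_rel + (-(B^3)) * C_omega_cube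
  have h12 : (Em 3)^12 = (Aa^3 - B^3) * (Em 9)^3 := by
    calc (Em 3)^12 = ((Em 3)^4)^3 := by ring
      _ = (Em 1 * rescale ω (Em 1) * rescale (ω^2) (Em 1) * Em 9)^3 := by rw [L1]
      _ = (Em 1)^3 * ((rescale ω (Em 1))^3 * (rescale (ω^2) (Em 1))^3) * (Em 9)^3 := by ring
      _ = (Aa - B) * ((Aa - C (R := ℂ) ω * B) * (Aa - C (R := ℂ) (ω^2) * B)) * (Em 9)^3 := by
          rw [hρ1, hρ2, hcube]
      _ = (Aa^3 - B^3) * (Em 9)^3 := by rw [hprod]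
  rw [h12, hAa, hB]
  ring

lemma map_int_complex_injective :
    Function.Injective (PowerSeries.map (Int.castRingHom ℂ)) := by
  intro f g h
  ext n
  have := congrArg (coeff (R := ℂ) n) h
  rw [PowerSeries.coeff_map, PowerSeries.coeff_map] at this
  exact Int.cast_injective this

end EtaAux

theorem eta_modular_equation :
    E 1 ^ 9 * E 9 ^ 3 + 9 * PowerSeries.X * (E 1 ^ 6 * E 9 ^ 6)
      + 27 * PowerSeries.X ^ 2 * (E 1 ^ 3 * E 9 ^ 9) = E 3 ^ 12 := by
  apply EtaAux.map_int_complex_injective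
  have h := EtaAux.main_complex
  simp only [EtaAux.Em] at h
  simp only [map_add, map_mul, map_pow, PowerSeries.map_X, map_ofNat]
  convert h using 2
end

section
/- If a₁(n) denotes the coefficients defined by ∑_{n≥0} a₁(n)q^n = E₁³/E₃⁴, then a₁(3n) = cφ₃(n) for all n ≥ 0. -/
open PowerSeries Finset

/-- extract every third coefficient -/
noncomputable def ext3 (f : PowerSeries ℤ) : PowerSeries ℤ :=
  PowerSeries.mk fun N => PowerSeries.coeff (R := ℤ) (3 * N) f

lemma cubeSub_coeff (f : PowerSeries ℤ) (N : ℕ) :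
    PowerSeries.coeff (R := ℤ) N (cubeSub f) = if 3 ∣ N then PowerSeries.coeff (R := ℤ) (N / 3) f else 0 := by
  simp [cubeSub]

lemma cubeSub_coeff3 (f : PowerSeries ℤ) (N : ℕ) :
    PowerSeries.coeff (R := ℤ) (3 * N) (cubeSub f) = PowerSeries.coeff (R := ℤ) N f := by
  simp [cubeSub_coeff, Nat.mul_div_cancel_left _ (by norm_num : 0 < 3)]

lemma cubeSub_one : cubeSub 1 = 1 := by
  ext N
  rw [cubeSub_coeff]
  rcases Nat.eq_zero_or_pos N with h | h
  · subst h; simp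
  · have h1 : PowerSeries.coeff (R := ℤ) N (1 : PowerSeries ℤ) = 0 := by
      rw [PowerSeries.coeff_one, if_neg (by omega)]
    rw [h1]
    split_ifs with h3
    · rw [PowerSeries.coeff_one, if_neg]; omega
    · rfl

lemma cubeSub_mul (f g : PowerSeries ℤ) : cubeSub (f * g) = cubeSub f * cubeSub g := by
  ext N
  rw [cubeSub_coeff]
  conv_rhs => rw [PowerSeries.coeff_mul]
  by_cases h3 : 3 ∣ N
  · obtain ⟨M, rfl⟩ := h3
    rw [if_pos ⟨M, rfl⟩, Nat.mul_div_cancel_left _ (by norm_num : 0 < 3),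
      PowerSeries.coeff_mul]
    have himg : (Finset.HasAntidiagonal.antidiagonal M).image (fun p => (3 * p.1, 3 * p.2))
        ⊆ Finset.HasAntidiagonal.antidiagonal (3 * M) := by
      intro p hp
      simp only [Finset.mem_image, Finset.HasAntidiagonal.mem_antidiagonal] at hp ⊢
      obtain ⟨q, hq, rfl⟩ := hp
      omega
    rw [← Finset.sum_subset himg]
    · rw [Finset.sum_image (by intro a _ b _ h; simp only [Prod.mk.injEq] at h; exact Prod.ext (by omega) (by omega))]
      apply Finset.sum_congr rfl
      intro p hp
      rw [cubeSub_coeff3, cubeSub_coeff3]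
    · intro p hp hnp
      simp only [Finset.mem_image, Finset.HasAntidiagonal.mem_antidiagonal] at hp hnp
      rw [cubeSub_coeff, cubeSub_coeff]
      by_cases h1 : 3 ∣ p.1
      · by_cases h2 : 3 ∣ p.2
        · exfalso
          obtain ⟨u, hu⟩ := h1; obtain ⟨v, hv⟩ := h2
          exact hnp ⟨(u, v), by omega, by rw [Prod.ext_iff]; constructor <;> simp <;> omega⟩
        · rw [if_neg h2, mul_zero]
      · rw [if_neg h1, zero_mul]
  · rw [if_neg h3]
    symm
    apply Finset.sum_eq_zero
    intro p hp
    simp only [Finset.HasAntidiagonal.mem_antidiagonal] at hp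
    rw [cubeSub_coeff, cubeSub_coeff]
    by_cases h1 : 3 ∣ p.1
    · by_cases h2 : 3 ∣ p.2
      · exact absurd (hp ▸ Nat.dvd_add h1 h2) h3
      · rw [if_neg h2, mul_zero]
    · rw [if_neg h1, zero_mul]

lemma ext3_mul_cubeSub (f g : PowerSeries ℤ) : ext3 (f * cubeSub g) = ext3 f * g := by
  ext N
  rw [ext3, PowerSeries.coeff_mk, PowerSeries.coeff_mul, PowerSeries.coeff_mul]
  have himg : (Finset.HasAntidiagonal.antidiagonal N).image (fun p => (3 * p.1, 3 * p.2))
      ⊆ Finset.HasAntidiagonal.antidiagonal (3 * N) := by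
    intro p hp
    simp only [Finset.mem_image, Finset.HasAntidiagonal.mem_antidiagonal] at hp ⊢
    obtain ⟨q, hq, rfl⟩ := hp
    omega
  rw [← Finset.sum_subset himg]
  · rw [Finset.sum_image (by intro a _ b _ h; simp only [Prod.mk.injEq] at h; exact Prod.ext (by omega) (by omega))]
    apply Finset.sum_congr rfl
    intro p hp
    rw [cubeSub_coeff3, ext3, PowerSeries.coeff_mk]
  · intro p hp hnp
    simp only [Finset.mem_image, Finset.HasAntidiagonal.mem_antidiagonal] at hp hnp
    rw [cubeSub_coeff]
    by_cases h2 : 3 ∣ p.2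
    · exfalso
      obtain ⟨v, hv⟩ := h2
      refine hnp ⟨(N - v, v), by omega, ?_⟩
      rw [Prod.ext_iff]; constructor <;> simp <;> omega
    · rw [if_neg h2, mul_zero]

lemma coeff_prod_one_sub_stable (k : ℕ) (hk : 1 ≤ k) (N M : ℕ) (hNM : N ≤ M) :
    PowerSeries.coeff (R := ℤ) N
      (∏ n ∈ Finset.range (M + 1), (1 - (PowerSeries.X : PowerSeries ℤ) ^ (k * (n + 1))))
    = PowerSeries.coeff (R := ℤ) N (E k) := by
  rw [E, PowerSeries.coeff_mk]
  induction M with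
  | zero =>
    interval_cases N
    rfl
  | succ M ih =>
    rcases Nat.lt_or_ge N (M + 1) with h | h
    · rw [← ih (by omega), Finset.prod_range_succ, mul_one_sub,
        map_sub]
      have : PowerSeries.coeff (R := ℤ) N
          ((∏ n ∈ Finset.range (M + 1), (1 - (PowerSeries.X : PowerSeries ℤ) ^ (k * (n + 1)))) *
            (PowerSeries.X : PowerSeries ℤ) ^ (k * (M + 1 + 1))) = 0 := by
        rw [PowerSeries.coeff_mul_X_pow', if_neg]
        intro hle
        have : k * (M + 2) ≤ N := hle
        nlinarith
      rw [this, sub_zero]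
    · have : N = M + 1 := by omega
      subst this
      rfl

lemma E_one_sub (k : ℕ) (hk : 1 ≤ k) :
    E k = PowerSeries.mk fun N => PowerSeries.coeff (R := ℤ) N
      (∏ n ∈ Finset.range (N + 1), (1 - (PowerSeries.X : PowerSeries ℤ) ^ (k * (n + 1)))) := rfl

lemma cubeSub_X_pow (j : ℕ) :
    cubeSub ((PowerSeries.X : PowerSeries ℤ) ^ j) = (PowerSeries.X : PowerSeries ℤ) ^ (3 * j) := by
  ext N
  rw [cubeSub_coeff]
  by_cases h : 3 ∣ N
  · rw [if_pos h, PowerSeries.coeff_X_pow, PowerSeries.coeff_X_pow]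
    obtain ⟨M, rfl⟩ := h
    rw [Nat.mul_div_cancel_left _ (by norm_num : 0 < 3)]
    split_ifs with h1 h2 h3
    · rfl
    · omega
    · omega
    · rfl
  · rw [if_neg h, PowerSeries.coeff_X_pow, if_neg (by omega)]

lemma cubeSub_sub (f g : PowerSeries ℤ) : cubeSub (f - g) = cubeSub f - cubeSub g := by
  ext N
  rw [cubeSub_coeff, map_sub, map_sub, cubeSub_coeff, cubeSub_coeff]
  split_ifs with h
  · rfl
  · simp

lemma E_three : E 3 = cubeSub (E 1) := by
  ext N
  rw [E, PowerSeries.coeff_mk, cubeSub_coeff]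
  have key : (∏ n ∈ Finset.range (N + 1), (1 - (PowerSeries.X : PowerSeries ℤ) ^ (3 * (n + 1))))
      = cubeSub (∏ n ∈ Finset.range (N + 1), (1 - (PowerSeries.X : PowerSeries ℤ) ^ (1 * (n + 1)))) := by
    induction N with
    | zero =>
      norm_num
      rw [cubeSub_sub, cubeSub_one, ← pow_one (PowerSeries.X : PowerSeries ℤ), cubeSub_X_pow]
      norm_num
    | succ M ih =>
      rw [Finset.prod_range_succ]
      conv_rhs => rw [Finset.prod_range_succ]
      rw [cubeSub_mul, ← ih, cubeSub_sub, cubeSub_one, cubeSub_X_pow]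
      norm_num
  rw [key, cubeSub_coeff]
  split_ifs with h
  · obtain ⟨M, rfl⟩ := h
    rw [Nat.mul_div_cancel_left _ (by norm_num : 0 < 3)]
    exact coeff_prod_one_sub_stable 1 le_rfl M (3 * M) (by omega)
  · rfl

lemma constCoeff_E1 : PowerSeries.constantCoeff (R := ℤ) (E 1) = 1 := by
  have : PowerSeries.constantCoeff (R := ℤ) (E 1) = PowerSeries.coeff (R := ℤ) 0 (E 1) := by
    rw [PowerSeries.coeff_zero_eq_constantCoeff]
  rw [this, E, PowerSeries.coeff_mk]
  simp

lemma inv1_spec (f : PowerSeries ℤ) (hf : PowerSeries.constantCoeff (R := ℤ) f = 1) :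
    f * inv1 f = 1 :=
  PowerSeries.mul_invOfUnit f 1 (by simpa using hf)

lemma inv1_unique (f g : PowerSeries ℤ) (hf : PowerSeries.constantCoeff (R := ℤ) f = 1)
    (hg : f * g = 1) : inv1 f = g := by
  have h1 : f * inv1 f = 1 := inv1_spec f hf
  have := congrArg (· * g) h1
  simp only [one_mul] at this
  calc inv1 f = inv1 f * (f * g) := by rw [hg, mul_one]
    _ = (f * inv1 f) * g := by ring
    _ = g := by rw [h1, one_mul]

lemma cubeSub_inv1 (f : PowerSeries ℤ) (hf : PowerSeries.constantCoeff (R := ℤ) f = 1) :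
    inv1 (cubeSub f) = cubeSub (inv1 f) := by
  apply inv1_unique
  · rw [← PowerSeries.coeff_zero_eq_constantCoeff, cubeSub_coeff, if_pos ⟨0, rfl⟩]
    simpa [PowerSeries.coeff_zero_eq_constantCoeff] using hf
  · rw [← cubeSub_mul, inv1_spec f hf, cubeSub_one]


lemma g2_even (m : ℤ) : 2 ∣ 3*m^2+m := by
  obtain ⟨t, ht⟩ := Int.even_mul_succ_self m
  exact ⟨t + m^2, by linear_combination ht⟩

lemma g2_nonneg (m : ℤ) : 0 ≤ 3*m^2+m := by
  rcases le_or_gt 0 m with h | h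
  · nlinarith
  · nlinarith

lemma g2_bound {m : ℤ} {J : ℕ} (h : 3*m^2+m ≤ 2*(J:ℤ)) : -(J:ℤ) ≤ m ∧ m ≤ J := by
  constructor
  · by_contra hc
    push_neg at hc
    nlinarith [sq_nonneg (m + J)]
  · by_contra hc
    push_neg at hc
    nlinarith [sq_nonneg (m - J)]

lemma Q_nonneg (a b : ℤ) : 0 ≤ a^2+a*b+b^2 := by
  nlinarith [sq_nonneg (a+b), sq_nonneg a, sq_nonneg b]

lemma Q_bound {a b : ℤ} {J : ℕ} (h : a^2+a*b+b^2 ≤ (J:ℤ)) :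
    -(J:ℤ) ≤ a ∧ a ≤ J ∧ -(J:ℤ) ≤ b ∧ b ≤ J := by
  have h2 : a^2 ≤ 2*(J:ℤ) := by nlinarith [sq_nonneg (a+b), sq_nonneg b]
  have h3 : b^2 ≤ 2*(J:ℤ) := by nlinarith [sq_nonneg (a+b), sq_nonneg a]
  refine ⟨?_, ?_, ?_, ?_⟩
  · by_contra hc; push_neg at hc; nlinarith [sq_nonneg (a + J)]
  · by_contra hc; push_neg at hc; nlinarith [sq_nonneg (a - J)]
  · by_contra hc; push_neg at hc; nlinarith [sq_nonneg (b + J)]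
  · by_contra hc; push_neg at hc; nlinarith [sq_nonneg (b - J)]

lemma collapse (M : ℕ) (u v f g : ℤ) (hu : 0 ≤ u) (hu2 : 2 ∣ u) (hv : 0 ≤ v) (hv2 : 2 ∣ v) :
    ∑ p ∈ Finset.HasAntidiagonal.antidiagonal M,
      (if u = 2*(p.1:ℤ) then f else 0) * (if v = 2*(p.2:ℤ) then g else 0)
    = if u + v = 2*(M:ℤ) then f * g else 0 := by
  obtain ⟨u', rfl⟩ := hu2
  obtain ⟨v', rfl⟩ := hv2
  have hu' : 0 ≤ u' := by omega
  have hv' : 0 ≤ v' := by omega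
  by_cases h : 2*u' + 2*v' = 2*(M:ℤ)
  · rw [if_pos h]
    have hM : u'.toNat + v'.toNat = M := by omega
    rw [Finset.sum_eq_single (u'.toNat, v'.toNat)]
    · rw [if_pos (by simp; omega), if_pos (by simp; omega)]
    · intro p hp hne
      simp only [Finset.HasAntidiagonal.mem_antidiagonal] at hp
      rcases eq_or_ne (2*u') (2*(p.1:ℤ)) with h1 | h1
      · rcases eq_or_ne (2*v') (2*(p.2:ℤ)) with h2 | h2
        · exfalso; apply hne
          have : p.1 = u'.toNat := by omega
          have : p.2 = v'.toNat := by omega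
          ext <;> omega
        · rw [if_neg h2, mul_zero]
      · rw [if_neg h1, zero_mul]
    · intro hmem
      exfalso
      exact hmem (by simp [Finset.HasAntidiagonal.mem_antidiagonal]; omega)
  · rw [if_neg h]
    apply Finset.sum_eq_zero
    intro p hp
    simp only [Finset.HasAntidiagonal.mem_antidiagonal] at hp
    rcases eq_or_ne (2*u') (2*(p.1:ℤ)) with h1 | h1
    · rcases eq_or_ne (2*v') (2*(p.2:ℤ)) with h2 | h2
      · exfalso; apply h; omega
      · rw [if_neg h2, mul_zero]
    · rw [if_neg h1, zero_mul]

/-- pentagonal coefficients -/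
noncomputable def pent (j : ℕ) : ℤ :=
  ∑ m ∈ Finset.Icc (-(j:ℤ)-1) ((j:ℤ)+1),
    if 3*m^2+m = 2*(j:ℤ) then (Int.negOnePow m : ℤ) else 0

noncomputable def P : PowerSeries ℤ := PowerSeries.mk pent


lemma g2_bound' {m : ℤ} {J : ℕ} (h : 3*m^2+m ≤ 2*(J:ℤ)) : -(J:ℤ) ≤ m ∧ m ≤ J := by
  constructor
  · by_contra hc; push_neg at hc; nlinarith [sq_nonneg (m + J)]
  · by_contra hc; push_neg at hc; nlinarith [sq_nonneg (m - J)]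

/-- extension of `pent` sum to any larger interval -/
lemma pent_rep (j J : ℕ) (hjJ : j ≤ J) :
    pent j = ∑ m ∈ Finset.Icc (-(J:ℤ)-1) ((J:ℤ)+1),
      if 3*m^2+m = 2*(j:ℤ) then (Int.negOnePow m : ℤ) else 0 := by
  rw [pent]
  apply Finset.sum_subset
  · apply Finset.Icc_subset_Icc <;> push_cast <;> omega
  · intro m _ hm
    rw [Finset.mem_Icc] at hm
    push_neg at hm
    rw [if_neg]
    intro hc
    have := g2_bound' (J := j) (le_of_eq hc)
    omega

lemma frob3_cond (m : Fin 2 → ℤ) :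
    (∑ i, m i ^ 2 + ∑ i, ∑ j, if i < j then m i * m j else 0)
      = m 0 ^ 2 + m 0 * m 1 + m 1 ^ 2 := by
  simp [Fin.sum_univ_two]
  ring

lemma frob3_coeff (i : ℕ) :
    PowerSeries.coeff (R := ℤ) i (frobTheta 3)
      = ((((Finset.Icc (-(i:ℤ)-1) ((i:ℤ)+1)) ×ˢ (Finset.Icc (-(i:ℤ)-1) ((i:ℤ)+1))).filter
          (fun p => p.1^2 + p.1*p.2 + p.2^2 = (i:ℤ))).card : ℤ) := by
  rw [frobTheta, PowerSeries.coeff_mk]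
  congr 1
  let F := (((Finset.Icc (-(i:ℤ)-1) ((i:ℤ)+1)) ×ˢ (Finset.Icc (-(i:ℤ)-1) ((i:ℤ)+1))).filter
          (fun p => p.1^2 + p.1*p.2 + p.2^2 = (i:ℤ)))
  have e : {m : Fin (3 - 1) → ℤ //
      (∑ i, m i ^ 2 + ∑ i, ∑ j, if i < j then m i * m j else 0) = (i : ℤ)} ≃ {p : ℤ × ℤ // p ∈ F} := by
    refine ⟨fun m => ⟨(m.1 0, m.1 1), ?_⟩, fun p => ⟨![p.1.1, p.1.2], ?_⟩, ?_, ?_⟩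
    · have hc := m.2
      rw [frob3_cond] at hc
      simp only [F, Finset.mem_filter, Finset.mem_product, Finset.mem_Icc]
      have hb := Q_bound (a := m.1 0) (b := m.1 1) (J := i) (le_of_eq hc)
      exact ⟨⟨⟨by omega, by omega⟩, ⟨by omega, by omega⟩⟩, hc⟩
    · have hp := p.2
      simp only [F, Finset.mem_filter] at hp
      rw [frob3_cond]
      simpa using hp.2
    · intro m
      ext j
      fin_cases j <;> rfl
    · intro p
      rfl
  rw [Nat.card_congr e, Nat.card_eq_finsetCard]

lemma frob3_rep (i J : ℕ) (hiJ : i ≤ J) :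
    PowerSeries.coeff (R := ℤ) i (frobTheta 3)
      = ∑ p ∈ (Finset.Icc (-(J:ℤ)-1) ((J:ℤ)+1)) ×ˢ (Finset.Icc (-(J:ℤ)-1) ((J:ℤ)+1)),
          if 2*(p.1^2 + p.1*p.2 + p.2^2) = 2*(i:ℤ) then (1:ℤ) else 0 := by
  have hsub : Finset.Icc (-(i:ℤ)-1) ((i:ℤ)+1) ⊆ Finset.Icc (-(J:ℤ)-1) ((J:ℤ)+1) :=
    Finset.Icc_subset_Icc (by push_cast; omega) (by push_cast; omega)
  rw [frob3_coeff, Finset.card_filter]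
  push_cast
  rw [← Finset.sum_subset (Finset.product_subset_product hsub hsub)]
  · apply Finset.sum_congr rfl
    intro p _
    split_ifs with h1 h2 h3
    · rfl
    · exact absurd (by linarith) h2
    · exact absurd (by linarith) h1
    · rfl
  · intro p hp hnp
    simp only [Finset.mem_product, Finset.mem_Icc] at hp hnp
    rw [if_neg]
    intro hc
    have hq : p.1^2 + p.1*p.2 + p.2^2 = (i:ℤ) := by linarith
    have := Q_bound (J := i) (le_of_eq hq)
    omega

noncomputable section

def SB (J : ℕ) : Finset ℤ := Finset.Icc (-(J:ℤ)-1) ((J:ℤ)+1)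

def pA (x : ℤ) (n : ℕ) : ℤ := if 3*x^2+x = 2*(n:ℤ) then (Int.negOnePow x : ℤ) else 0

def qA (p : ℤ × ℤ) (n : ℕ) : ℤ := if 2*(p.1^2+p.1*p.2+p.2^2) = 2*(n:ℤ) then 1 else 0

def pB (p : ℤ × ℤ) (n : ℕ) : ℤ :=
  if (3*p.1^2+p.1) + (3*p.2^2+p.2) = 2*(n:ℤ)
  then (Int.negOnePow p.1 : ℤ) * (Int.negOnePow p.2 : ℤ) else 0

lemma coeff_P (n : ℕ) : PowerSeries.coeff (R := ℤ) n P = pent n := by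
  rw [P, PowerSeries.coeff_mk]

lemma pent_rep' (j J : ℕ) (h : j ≤ J) : pent j = ∑ x ∈ SB J, pA x j := pent_rep j J h

lemma frob3_rep' (i J : ℕ) (h : i ≤ J) :
    PowerSeries.coeff (R := ℤ) i (frobTheta 3) = ∑ p ∈ SB J ×ˢ SB J, qA p i := frob3_rep i J h

lemma PP_rep (M J : ℕ) (hMJ : M ≤ J) :
    PowerSeries.coeff (R := ℤ) M (P * P) = ∑ p ∈ SB J ×ˢ SB J, pB p M :=
  calc PowerSeries.coeff (R := ℤ) M (P * P)
      = ∑ p ∈ Finset.HasAntidiagonal.antidiagonal M, pent p.1 * pent p.2 := by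
        rw [PowerSeries.coeff_mul]
        exact Finset.sum_congr rfl fun p _ => by rw [coeff_P, coeff_P]
    _ = ∑ p ∈ Finset.HasAntidiagonal.antidiagonal M, ∑ x ∈ SB J, ∑ y ∈ SB J, pA x p.1 * pA y p.2 :=
        Finset.sum_congr rfl fun p hp => by
          rw [Finset.HasAntidiagonal.mem_antidiagonal] at hp
          rw [pent_rep' p.1 J (by omega), pent_rep' p.2 J (by omega), Finset.sum_mul_sum]
    _ = ∑ x ∈ SB J, ∑ p ∈ Finset.HasAntidiagonal.antidiagonal M, ∑ y ∈ SB J, pA x p.1 * pA y p.2 :=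
        Finset.sum_comm
    _ = ∑ x ∈ SB J, ∑ y ∈ SB J, ∑ p ∈ Finset.HasAntidiagonal.antidiagonal M, pA x p.1 * pA y p.2 :=
        Finset.sum_congr rfl fun x _ => Finset.sum_comm
    _ = ∑ x ∈ SB J, ∑ y ∈ SB J, pB (x, y) M :=
        Finset.sum_congr rfl fun x _ => Finset.sum_congr rfl fun y _ => by
          simp only [pA, pB]
          exact collapse M _ _ _ _ (g2_nonneg x) (g2_even x) (g2_nonneg y) (g2_even y)
    _ = ∑ p ∈ SB J ×ˢ SB J, pB p M := (Finset.sum_product' _ _ _).symm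

lemma key3 (N : ℕ) :
    PowerSeries.coeff (R := ℤ) (3*N) (P^3) = PowerSeries.coeff (R := ℤ) N (frobTheta 3 * P) := by
  have hP3 : P^3 = P * (P * P) := by ring
  have hL : PowerSeries.coeff (R := ℤ) (3*N) (P^3)
      = ∑ p ∈ SB (3*N) ×ˢ (SB (3*N) ×ˢ SB (3*N)),
          if (3*p.1^2+p.1) + ((3*p.2.1^2+p.2.1) + (3*p.2.2^2+p.2.2)) = 2*(3*(N:ℤ))
          then (Int.negOnePow p.1 : ℤ) *
            ((Int.negOnePow p.2.1 : ℤ) * (Int.negOnePow p.2.2 : ℤ)) else 0 :=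
    calc PowerSeries.coeff (R := ℤ) (3*N) (P^3)
        = ∑ p ∈ Finset.HasAntidiagonal.antidiagonal (3*N), pent p.1 * PowerSeries.coeff (R := ℤ) p.2 (P*P) := by
          rw [hP3, PowerSeries.coeff_mul]
          exact Finset.sum_congr rfl fun p _ => by rw [coeff_P]
      _ = ∑ p ∈ Finset.HasAntidiagonal.antidiagonal (3*N), ∑ x ∈ SB (3*N), ∑ q ∈ SB (3*N) ×ˢ SB (3*N),
            pA x p.1 * pB q p.2 :=
          Finset.sum_congr rfl fun p hp => by
            rw [Finset.HasAntidiagonal.mem_antidiagonal] at hp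
            rw [pent_rep' p.1 (3*N) (by omega), PP_rep p.2 (3*N) (by omega),
              Finset.sum_mul_sum]
      _ = ∑ x ∈ SB (3*N), ∑ p ∈ Finset.HasAntidiagonal.antidiagonal (3*N), ∑ q ∈ SB (3*N) ×ˢ SB (3*N),
            pA x p.1 * pB q p.2 := Finset.sum_comm
      _ = ∑ x ∈ SB (3*N), ∑ q ∈ SB (3*N) ×ˢ SB (3*N), ∑ p ∈ Finset.HasAntidiagonal.antidiagonal (3*N),
            pA x p.1 * pB q p.2 := Finset.sum_congr rfl fun x _ => Finset.sum_comm
      _ = ∑ x ∈ SB (3*N), ∑ q ∈ SB (3*N) ×ˢ SB (3*N),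
            (if (3*x^2+x) + ((3*q.1^2+q.1) + (3*q.2^2+q.2)) = 2*(3*(N:ℤ))
             then (Int.negOnePow x : ℤ) *
               ((Int.negOnePow q.1 : ℤ) * (Int.negOnePow q.2 : ℤ)) else 0) :=
          Finset.sum_congr rfl fun x _ => Finset.sum_congr rfl fun q _ => by
            simp only [pA, pB]
            rw [collapse (3*N) _ _ _ _ (g2_nonneg x) (g2_even x)
              (by have := g2_nonneg q.1; have := g2_nonneg q.2; linarith)
              (dvd_add (g2_even q.1) (g2_even q.2))]
            have hc : 2*((3*N:ℕ):ℤ) = 2*(3*(N:ℤ)) := by push_cast; ring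
            rw [hc]
      _ = _ := (Finset.sum_product' _ _ _).symm
  have hR : PowerSeries.coeff (R := ℤ) N (frobTheta 3 * P)
      = ∑ q ∈ (SB N ×ˢ SB N) ×ˢ SB N,
          if 2*(q.1.1^2 + q.1.1*q.1.2 + q.1.2^2) + (3*q.2^2+q.2) = 2*(N:ℤ)
          then (Int.negOnePow q.2 : ℤ) else 0 :=
    calc PowerSeries.coeff (R := ℤ) N (frobTheta 3 * P)
        = ∑ p ∈ Finset.HasAntidiagonal.antidiagonal N, PowerSeries.coeff (R := ℤ) p.1 (frobTheta 3) * pent p.2 := by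
          rw [PowerSeries.coeff_mul]
          exact Finset.sum_congr rfl fun p _ => by rw [coeff_P]
      _ = ∑ p ∈ Finset.HasAntidiagonal.antidiagonal N, ∑ q ∈ SB N ×ˢ SB N, ∑ m ∈ SB N,
            qA q p.1 * pA m p.2 :=
          Finset.sum_congr rfl fun p hp => by
            rw [Finset.HasAntidiagonal.mem_antidiagonal] at hp
            rw [frob3_rep' p.1 N (by omega), pent_rep' p.2 N (by omega),
              Finset.sum_mul_sum]
      _ = ∑ q ∈ SB N ×ˢ SB N, ∑ p ∈ Finset.HasAntidiagonal.antidiagonal N, ∑ m ∈ SB N,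
            qA q p.1 * pA m p.2 := Finset.sum_comm
      _ = ∑ q ∈ SB N ×ˢ SB N, ∑ m ∈ SB N, ∑ p ∈ Finset.HasAntidiagonal.antidiagonal N,
            qA q p.1 * pA m p.2 := Finset.sum_congr rfl fun q _ => Finset.sum_comm
      _ = ∑ q ∈ SB N ×ˢ SB N, ∑ m ∈ SB N,
            (if 2*(q.1^2 + q.1*q.2 + q.2^2) + (3*m^2+m) = 2*(N:ℤ)
             then (Int.negOnePow m : ℤ) else 0) :=
          Finset.sum_congr rfl fun q _ => Finset.sum_congr rfl fun m _ => by
            simp only [qA, pA]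
            rw [collapse N _ _ _ _
              (by have := Q_nonneg q.1 q.2; linarith) ⟨_, rfl⟩
              (g2_nonneg m) (g2_even m), one_mul]
      _ = _ := (Finset.sum_product' _ _ _).symm
  rw [hL, hR]
  rw [← Finset.sum_filter, ← Finset.sum_filter]
  apply Finset.sum_nbij'
    (i := fun p => ((p.1 - (p.1+p.2.1+p.2.2)/3, p.2.1 - (p.1+p.2.1+p.2.2)/3),
      (p.1+p.2.1+p.2.2)/3))
    (j := fun q => (q.2 + q.1.1, q.2 + q.1.2, q.2 - q.1.1 - q.1.2))
  · rintro ⟨x, y, z⟩ hp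
    simp only [SB, Finset.mem_filter, Finset.mem_product, Finset.mem_Icc] at hp ⊢
    obtain ⟨⟨hx, hy, hz⟩, heq⟩ := hp
    have h3 : (3:ℤ) ∣ x+y+z := ⟨2*(N:ℤ) - (x^2+y^2+z^2), by linarith⟩
    set m := (x+y+z)/3 with hmdef
    have hm : 3 * m = x+y+z := by rw [mul_comm]; exact Int.ediv_mul_cancel h3
    have h9 : 3*(2*((x-m)^2 + (x-m)*(y-m) + (y-m)^2) + (3*m^2+m)) = 3*(2*(N:ℤ)) := by
      linear_combination heq + (3*z + 9*m - 3*x - 3*y + 1) * hm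
    have hkey : 2*((x-m)^2 + (x-m)*(y-m) + (y-m)^2) + (3*m^2+m) = 2*(N:ℤ) := by linarith
    have hQn := Q_nonneg (x-m) (y-m)
    have hgn := g2_nonneg m
    have hmb := g2_bound' (m := m) (J := N) (by linarith)
    have hab := Q_bound (a := x-m) (b := y-m) (J := N) (by linarith)
    refine ⟨⟨⟨⟨by omega, by omega⟩, by omega, by omega⟩, by omega, by omega⟩, ?_⟩
    linear_combination hkey
  · rintro ⟨⟨a, b⟩, m⟩ hq
    simp only [SB, Finset.mem_filter, Finset.mem_product, Finset.mem_Icc] at hq ⊢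
    obtain ⟨⟨⟨ha, hb⟩, hm⟩, heq⟩ := hq
    have hQn := Q_nonneg a b
    have hgn := g2_nonneg m
    have hmb := g2_bound' (m := m) (J := N) (by linarith)
    have hab := Q_bound (a := a) (b := b) (J := N) (by linarith)
    have hcast : ((3*N:ℕ):ℤ) = 3*(N:ℤ) := by push_cast; ring
    refine ⟨⟨⟨?_, ?_⟩, ⟨?_, ?_⟩, ?_, ?_⟩, ?_⟩
    · rw [hcast]; omega
    · rw [hcast]; omega
    · rw [hcast]; omega
    · rw [hcast]; omega
    · rw [hcast]; omega
    · rw [hcast]; omega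
    · linear_combination 3 * heq
  · rintro ⟨x, y, z⟩ hp
    simp only [SB, Finset.mem_filter, Finset.mem_product, Finset.mem_Icc] at hp
    obtain ⟨-, heq⟩ := hp
    have h3 : (3:ℤ) ∣ x+y+z := ⟨2*(N:ℤ) - (x^2+y^2+z^2), by linarith⟩
    have hm : 3 * ((x+y+z)/3) = x+y+z := by rw [mul_comm]; exact Int.ediv_mul_cancel h3
    simp only [Prod.mk.injEq]
    refine ⟨by ring, by ring, by omega⟩
  · rintro ⟨⟨a, b⟩, m⟩ hq
    have hdiv : ((m + a) + (m + b) + (m - a - b)) / 3 = m := by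
      rw [show (m + a) + (m + b) + (m - a - b) = 3 * m by ring,
        Int.mul_ediv_cancel_left _ (by norm_num)]
    simp only [Prod.mk.injEq]
    rw [hdiv]
    refine ⟨⟨by ring, by ring⟩, rfl⟩
  · rintro ⟨x, y, z⟩ hp
    simp only [SB, Finset.mem_filter, Finset.mem_product, Finset.mem_Icc] at hp
    obtain ⟨-, heq⟩ := hp
    have h3 : (3:ℤ) ∣ x+y+z := ⟨2*(N:ℤ) - (x^2+y^2+z^2), by linarith⟩
    have hm : 3 * ((x+y+z)/3) = x+y+z := by rw [mul_comm]; exact Int.ediv_mul_cancel h3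
    have hu : (Int.negOnePow x * (Int.negOnePow y * Int.negOnePow z) : ℤˣ)
        = Int.negOnePow ((x+y+z)/3) := by
      rw [← Int.negOnePow_add, ← Int.negOnePow_add,
        show x + (y + z) = 2*((x+y+z)/3) + (x+y+z)/3 by omega,
        Int.negOnePow_add, Int.negOnePow_two_mul, one_mul]
    calc (Int.negOnePow x : ℤ) * ((Int.negOnePow y : ℤ) * (Int.negOnePow z : ℤ))
        = ((Int.negOnePow x * (Int.negOnePow y * Int.negOnePow z) : ℤˣ) : ℤ) := by
          rw [Units.val_mul, Units.val_mul]
      _ = (Int.negOnePow ((x+y+z)/3) : ℤ) := by rw [hu]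
end

noncomputable section

/-- the top run of `S` below `a` -/
def runT (S : Finset ℕ) (a : ℕ) : Finset ℕ := S.filter (fun k => Finset.Icc k a ⊆ S)

/-- Franklin's involution -/
def phi (S : Finset ℕ) : Finset ℕ :=
  if h : S.Nonempty then
    (if S.min' h ≤ (runT S (S.max' h)).card
     then insert (S.max' h + 1) ((S.erase (S.min' h)).erase (S.max' h + 1 - S.min' h))
     else insert (S.max' h - (runT S (S.max' h)).card)
       (insert (runT S (S.max' h)).card (S.erase (S.max' h))))
  else ∅

def isExc (S : Finset ℕ) : Prop :=
  ∃ k : ℕ, 1 ≤ k ∧ (S = Finset.Icc k (2*k-1) ∨ S = Finset.Icc (k+1) (2*k))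

noncomputable instance : DecidablePred isExc := fun _ => Classical.dec _

variable {S : Finset ℕ}

lemma runT_spec (h : S.Nonempty) (h1 : ∀ x ∈ S, 1 ≤ x) :
    1 ≤ (runT S (S.max' h)).card ∧
    (runT S (S.max' h)).card ≤ S.max' h ∧
    S.min' h ≤ S.max' h + 1 - (runT S (S.max' h)).card ∧
    Finset.Icc (S.max' h + 1 - (runT S (S.max' h)).card) (S.max' h) ⊆ S ∧
    S.max' h - (runT S (S.max' h)).card ∉ S := by
  set a := S.max' h with ha
  have hTne : (runT S a).Nonempty := by
    refine ⟨a, ?_⟩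
    rw [runT, Finset.mem_filter]
    refine ⟨S.max'_mem h, ?_⟩
    intro j hj
    rw [Finset.mem_Icc] at hj
    have : j = a := le_antisymm hj.2 hj.1
    rw [this]; exact S.max'_mem h
  set m := (runT S a).min' hTne with hm
  have hmT : m ∈ runT S a := Finset.min'_mem _ _
  have hmS : m ∈ S := (Finset.mem_filter.mp hmT).1
  have hmsub : Finset.Icc m a ⊆ S := (Finset.mem_filter.mp hmT).2
  have hma : m ≤ a := Finset.le_max' S m hmS
  have hTeq : runT S a = Finset.Icc m a := by
    apply Finset.Subset.antisymm
    · intro k hk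
      rw [Finset.mem_Icc]
      exact ⟨Finset.min'_le _ _ hk, Finset.le_max' S k (Finset.mem_filter.mp hk).1⟩
    · intro j hj
      rw [Finset.mem_Icc] at hj
      rw [runT, Finset.mem_filter]
      refine ⟨hmsub (Finset.mem_Icc.mpr hj), fun i hi => hmsub ?_⟩
      rw [Finset.mem_Icc] at hi ⊢
      omega
  have hcard : (runT S a).card = a + 1 - m := by rw [hTeq, Nat.card_Icc]
  have hm1 : 1 ≤ m := h1 m hmS
  refine ⟨by omega, by omega, ?_, ?_, ?_⟩
  · have := S.min'_le m hmS
    omega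
  · intro j hj
    apply hmsub
    rw [Finset.mem_Icc] at hj ⊢
    omega
  · intro hcon
    have hm1' : a - (runT S a).card = m - 1 := by omega
    rw [hm1'] at hcon
    have : m - 1 ∈ runT S a := by
      rw [runT, Finset.mem_filter]
      refine ⟨hcon, fun i hi => ?_⟩
      rw [Finset.mem_Icc] at hi
      rcases Nat.eq_or_lt_of_le hi.1 with he | hl
      · rw [← he]; exact hcon
      · apply hmsub; rw [Finset.mem_Icc]; omega
    have := Finset.min'_le _ _ this
    omega

lemma runT_card_eq (h : S.Nonempty) (t : ℕ) (ht : 1 ≤ t) (hta : t ≤ S.max' h)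
    (hsub : Finset.Icc (S.max' h + 1 - t) (S.max' h) ⊆ S) (hnot : S.max' h - t ∉ S) :
    (runT S (S.max' h)).card = t := by
  set a := S.max' h with ha
  have hTeq : runT S a = Finset.Icc (a + 1 - t) a := by
    apply Finset.Subset.antisymm
    · intro k hk
      rw [runT, Finset.mem_filter] at hk
      rw [Finset.mem_Icc]
      have hka : k ≤ a := Finset.le_max' S k hk.1
      refine ⟨?_, hka⟩
      by_contra hc
      push_neg at hc
      exact hnot (hk.2 (Finset.mem_Icc.mpr (by omega)))
    · intro j hj
      rw [Finset.mem_Icc] at hj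
      rw [runT, Finset.mem_filter]
      refine ⟨hsub (Finset.mem_Icc.mpr hj), fun i hi => hsub ?_⟩
      rw [Finset.mem_Icc] at hi ⊢
      omega
  rw [hTeq, Nat.card_Icc]
  omega

lemma runT_card_ge (h : S.Nonempty) (t : ℕ) (hta : t ≤ S.max' h)
    (hsub : Finset.Icc (S.max' h + 1 - t) (S.max' h) ⊆ S) :
    t ≤ (runT S (S.max' h)).card := by
  set a := S.max' h with ha
  have : Finset.Icc (a + 1 - t) a ⊆ runT S a := by
    intro j hj
    rw [Finset.mem_Icc] at hj
    rw [runT, Finset.mem_filter]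
    refine ⟨hsub (Finset.mem_Icc.mpr hj), fun i hi => hsub ?_⟩
    rw [Finset.mem_Icc] at hi ⊢
    omega
  have := Finset.card_le_card this
  rw [Nat.card_Icc] at this
  omega

lemma runT_card_of_Icc {u v : ℕ} (huv : u ≤ v) (h : (Finset.Icc u v).Nonempty) :
    (runT (Finset.Icc u v) ((Finset.Icc u v).max' h)).card = v + 1 - u := by
  have hmax : (Finset.Icc u v).max' h = v := by
    apply le_antisymm
    · apply Finset.max'_le
      intro y hy
      exact (Finset.mem_Icc.mp hy).2
    · exact Finset.le_max' _ _ (Finset.mem_Icc.mpr ⟨huv, le_rfl⟩)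
  have hTeq : runT (Finset.Icc u v) v = Finset.Icc u v := by
    apply Finset.Subset.antisymm
    · exact Finset.filter_subset _ _
    · intro k hk
      rw [runT, Finset.mem_filter]
      rw [Finset.mem_Icc] at hk
      refine ⟨Finset.mem_Icc.mpr hk, fun i hi => ?_⟩
      rw [Finset.mem_Icc] at hi ⊢
      omega
  rw [hmax, hTeq, Nat.card_Icc]

lemma runT_card_congr {S T : Finset ℕ} (hST : S = T) (hS : S.Nonempty) (hT : T.Nonempty) :
    (runT S (S.max' hS)).card = (runT T (T.max' hT)).card := by subst hST; rfl

lemma max_mem_eq {S : Finset ℕ} (h : S.Nonempty) {u v : ℕ} (hST : S = Finset.Icc u v)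
    (huv : u ≤ v) : S.max' h = v := by
  subst hST
  apply le_antisymm
  · exact Finset.max'_le _ _ _ (fun y hy => (Finset.mem_Icc.mp hy).2)
  · exact Finset.le_max' _ _ (Finset.mem_Icc.mpr ⟨huv, le_rfl⟩)

lemma moveA_spec {S : Finset ℕ} (h : S.Nonempty) (h1 : ∀ x ∈ S, 1 ≤ x)
    (hsr : S.min' h ≤ (runT S (S.max' h)).card) (ha2s : 2 * S.min' h ≤ S.max' h) :
    (∑ i ∈ phi S, i) = ∑ i ∈ S, i ∧
    (phi S).card + 1 = S.card ∧
    (∀ x ∈ phi S, 1 ≤ x ∧ x ≤ S.max' h + 1) ∧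
    ¬ isExc (phi S) ∧
    phi (phi S) = S := by
  obtain ⟨hr1, hra, hsm, hsub, hnot⟩ := runT_spec h h1
  set a := S.max' h with ha
  set s := S.min' h with hs
  set r := (runT S a).card with hr
  have hsS : s ∈ S := Finset.min'_mem _ _
  have haS : a ∈ S := Finset.max'_mem _ _
  have hs1 : 1 ≤ s := h1 s hsS
  have hsa : s ≤ a := Finset.min'_le _ _ haS
  have hx : a + 1 - s ∈ S := hsub (Finset.mem_Icc.mpr ⟨by omega, by omega⟩)
  have hne_xs : a + 1 - s ≠ s := by omega
  have haa : a + 1 ∉ S := fun hc => by have := Finset.le_max' S _ hc; omega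
  have hphi : phi S = insert (a + 1) ((S.erase s).erase (a + 1 - s)) := by
    rw [phi, dif_pos h, if_pos hsr]
  set S' := insert (a + 1) ((S.erase s).erase (a + 1 - s)) with hS'
  have hmem : ∀ x, x ∈ S' ↔ x = a + 1 ∨ (x ∈ S ∧ x ≠ s ∧ x ≠ a + 1 - s) := by
    intro x
    simp only [hS', Finset.mem_insert, Finset.mem_erase]
    tauto
  have hS'ne : S'.Nonempty := ⟨a + 1, (hmem _).mpr (Or.inl rfl)⟩
  have hnotmem : a + 1 ∉ (S.erase s).erase (a + 1 - s) :=
    fun hc => haa (Finset.mem_of_mem_erase (Finset.mem_of_mem_erase hc))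
  have hxe : a + 1 - s ∈ S.erase s := Finset.mem_erase.mpr ⟨hne_xs, hx⟩
  -- sums
  have hsum1 : (a + 1 - s) + ∑ i ∈ (S.erase s).erase (a + 1 - s), i = ∑ i ∈ S.erase s, i :=
    Finset.add_sum_erase _ id hxe
  have hsum2 : s + ∑ i ∈ S.erase s, i = ∑ i ∈ S, i := Finset.add_sum_erase _ id hsS
  have hsum : (∑ i ∈ S', i) = ∑ i ∈ S, i := by
    rw [hS', Finset.sum_insert hnotmem]
    omega
  -- cards
  have hcard1 : ((S.erase s).erase (a + 1 - s)).card + 1 = (S.erase s).card :=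
    Finset.card_erase_add_one hxe
  have hcard2 : (S.erase s).card + 1 = S.card := Finset.card_erase_add_one hsS
  have hcard : S'.card + 1 = S.card := by
    rw [hS', Finset.card_insert_of_notMem hnotmem]
    omega
  -- max and min of S'
  have hmax' : S'.max' hS'ne = a + 1 := by
    apply le_antisymm
    · apply Finset.max'_le
      intro y hy
      rcases (hmem y).mp hy with rfl | ⟨hyS, -, -⟩
      · exact le_rfl
      · exact le_trans (Finset.le_max' S _ hyS) (by omega)
    · exact Finset.le_max' _ _ ((hmem _).mpr (Or.inl rfl))
  have hmin' : s + 1 ≤ S'.min' hS'ne := by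
    apply Finset.le_min'
    intro y hy
    rcases (hmem y).mp hy with rfl | ⟨hyS, hy1, -⟩
    · omega
    · have := Finset.min'_le S _ hyS
      omega
  -- run of S'
  have hr' : (runT S' (S'.max' hS'ne)).card = s := by
    rw [hmax']
    have hmax'' : S'.max' hS'ne = a + 1 := hmax'
    have := runT_card_eq hS'ne s hs1 (by omega : s ≤ S'.max' hS'ne)
      (by rw [hmax'']
          intro j hj
          rw [Finset.mem_Icc] at hj
          rcases Nat.eq_or_lt_of_le hj.2 with he | hl
          · exact (hmem _).mpr (Or.inl he)
          · refine (hmem _).mpr (Or.inr ⟨hsub (Finset.mem_Icc.mpr ⟨by omega, by omega⟩),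
              by omega, by omega⟩))
      (by rw [hmax'']
          intro hc
          rcases (hmem _).mp hc with he | ⟨-, -, hne⟩
          · omega
          · exact hne (by omega))
    rw [hmax''] at this
    exact this
  -- phi S' computes back to S
  have hphi' : phi S' = S := by
    have hcond : ¬ (S'.min' hS'ne ≤ (runT S' (S'.max' hS'ne)).card) := by
      rw [hr']; omega
    rw [phi, dif_pos hS'ne, if_neg hcond, hr', hmax']
    have e1 : S'.erase (a + 1) = (S.erase s).erase (a + 1 - s) := by
      rw [hS', Finset.erase_insert hnotmem]
    rw [e1, show a + 1 - s = a + 1 - s from rfl]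
    have e2 : (S.erase s).erase (a + 1 - s) = (S.erase (a + 1 - s)).erase s :=
      Finset.erase_right_comm
    rw [e2]
    have e3 : insert s ((S.erase (a + 1 - s)).erase s) = S.erase (a + 1 - s) :=
      Finset.insert_erase (Finset.mem_erase.mpr ⟨by omega, hsS⟩)
    rw [e3]
    exact Finset.insert_erase hx
  -- S' not exceptional
  have hnexc : ¬ isExc S' := by
    rintro ⟨k, hk1, hcase | hcase⟩
    · have hvmax : S'.max' hS'ne = 2*k-1 := max_mem_eq hS'ne hcase (by omega)
      have hrk : (runT S' (S'.max' hS'ne)).card = (2*k-1) + 1 - k := by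
        rw [runT_card_congr hcase hS'ne (by rw [← hcase]; exact hS'ne)]
        exact runT_card_of_Icc (by omega) _
      omega
    · have hvmax : S'.max' hS'ne = 2*k := max_mem_eq hS'ne hcase (by omega)
      have hrk : (runT S' (S'.max' hS'ne)).card = 2*k + 1 - (k+1) := by
        rw [runT_card_congr hcase hS'ne (by rw [← hcase]; exact hS'ne)]
        exact runT_card_of_Icc (by omega) _
      omega
  rw [hphi]
  refine ⟨hsum, hcard, ?_, hnexc, ?_⟩
  · intro x hxm
    rcases (hmem x).mp hxm with rfl | ⟨hxS, -, -⟩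
    · omega
    · exact ⟨h1 x hxS, le_trans (Finset.le_max' S _ hxS) (by omega)⟩
  · rw [← hphi] at hphi' ⊢
    exact hphi'

lemma min_mem_eq {S : Finset ℕ} (h : S.Nonempty) {u v : ℕ} (hST : S = Finset.Icc u v)
    (huv : u ≤ v) : S.min' h = u := by
  subst hST
  apply le_antisymm
  · exact Finset.min'_le _ _ (Finset.mem_Icc.mpr ⟨le_rfl, huv⟩)
  · exact Finset.le_min' _ _ _ (fun y hy => (Finset.mem_Icc.mp hy).1)

lemma moveB_spec {S : Finset ℕ} (h : S.Nonempty) (h1 : ∀ x ∈ S, 1 ≤ x)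
    (hrs : (runT S (S.max' h)).card < S.min' h)
    (ha2r : 2 * (runT S (S.max' h)).card < S.max' h) :
    (∑ i ∈ phi S, i) = ∑ i ∈ S, i ∧
    (phi S).card = S.card + 1 ∧
    (∀ x ∈ phi S, 1 ≤ x ∧ x ≤ S.max' h + 1) ∧
    ¬ isExc (phi S) ∧
    phi (phi S) = S := by
  obtain ⟨hr1, hra, hsm, hsub, hnot⟩ := runT_spec h h1
  set a := S.max' h with ha
  set s := S.min' h with hs
  set r := (runT S a).card with hr
  have hsS : s ∈ S := Finset.min'_mem _ _
  have haS : a ∈ S := Finset.max'_mem _ _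
  have hs1 : 1 ≤ s := h1 s hsS
  have hsa : s ≤ a := Finset.min'_le _ _ haS
  have hcondn : ¬ (s ≤ r) := by omega
  have hphi : phi S = insert (a - r) (insert r (S.erase a)) := by
    rw [phi, dif_pos h, if_neg hcondn]
  set S' := insert (a - r) (insert r (S.erase a)) with hS'
  have hmem : ∀ x, x ∈ S' ↔ x = a - r ∨ x = r ∨ (x ∈ S ∧ x ≠ a) := by
    intro x
    simp only [hS', Finset.mem_insert, Finset.mem_erase]
    tauto
  have hrz : r ∉ S.erase a := by
    intro hc
    have := Finset.min'_le S _ (Finset.mem_of_mem_erase hc)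
    omega
  have harz : a - r ∉ insert r (S.erase a) := by
    intro hc
    rcases Finset.mem_insert.mp hc with he | hc'
    · omega
    · exact hnot (Finset.mem_of_mem_erase hc')
  have hS'ne : S'.Nonempty := ⟨r, (hmem _).mpr (Or.inr (Or.inl rfl))⟩
  -- sums
  have hsum2 : a + ∑ i ∈ S.erase a, i = ∑ i ∈ S, i := Finset.add_sum_erase _ id haS
  have hsum : (∑ i ∈ S', i) = ∑ i ∈ S, i := by
    rw [hS', Finset.sum_insert harz, Finset.sum_insert hrz]
    omega
  -- cards
  have hcard2 : (S.erase a).card + 1 = S.card := Finset.card_erase_add_one haS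
  have hcard : S'.card = S.card + 1 := by
    rw [hS', Finset.card_insert_of_notMem harz, Finset.card_insert_of_notMem hrz]
    omega
  -- max and min of S'
  have hmax' : S'.max' hS'ne = a - 1 := by
    apply le_antisymm
    · apply Finset.max'_le
      intro y hy
      rcases (hmem y).mp hy with rfl | rfl | ⟨hyS, hyne⟩
      · omega
      · omega
      · have := Finset.le_max' S _ hyS; omega
    · apply Finset.le_max'
      rcases Nat.lt_or_ge r 2 with hr2 | hr2
      · exact (hmem _).mpr (Or.inl (by omega))
      · refine (hmem _).mpr (Or.inr (Or.inr ⟨hsub (Finset.mem_Icc.mpr ⟨by omega, by omega⟩),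
          by omega⟩))
  have hmin' : S'.min' hS'ne = r := by
    apply le_antisymm
    · exact Finset.min'_le _ _ ((hmem _).mpr (Or.inr (Or.inl rfl)))
    · apply Finset.le_min'
      intro y hy
      rcases (hmem y).mp hy with rfl | rfl | ⟨hyS, -⟩
      · omega
      · omega
      · have := Finset.min'_le S _ hyS; omega
  -- run of S' is at least r
  have hr' : r ≤ (runT S' (S'.max' hS'ne)).card := by
    rw [hmax']
    have := runT_card_ge hS'ne r (by rw [hmax']; omega)
      (by rw [hmax']
          intro j hj
          rw [Finset.mem_Icc] at hj
          rcases Nat.eq_or_lt_of_le hj.1 with he | hl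
          · exact (hmem _).mpr (Or.inl (by omega))
          · refine (hmem _).mpr (Or.inr (Or.inr ⟨hsub (Finset.mem_Icc.mpr ⟨by omega, by omega⟩),
              by omega⟩)))
    rw [hmax'] at this
    exact this
  -- phi S' computes back to S
  have hphi' : phi S' = S := by
    have hcond : S'.min' hS'ne ≤ (runT S' (S'.max' hS'ne)).card := by
      rw [hmin']; exact hr'
    rw [phi, dif_pos hS'ne, if_pos hcond, hmin', hmax']
    have e0 : a - 1 + 1 = a := by omega
    rw [e0]
    have e1 : S'.erase r = insert (a - r) (S.erase a) := by
      rw [hS', Finset.erase_insert_of_ne (by omega : a - r ≠ r), Finset.erase_insert hrz]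
    rw [e1]
    have e2 : (insert (a - r) (S.erase a)).erase (a - r) = S.erase a :=
      Finset.erase_insert (fun hc => hnot (Finset.mem_of_mem_erase hc))
    rw [e2]
    exact Finset.insert_erase haS
  -- S' not exceptional
  have hnexc : ¬ isExc S' := by
    rintro ⟨k, hk1, hcase | hcase⟩
    · have hvmax : S'.max' hS'ne = 2*k-1 := max_mem_eq hS'ne hcase (by omega)
      have hvmin : S'.min' hS'ne = k := min_mem_eq hS'ne hcase (by omega)
      omega
    · have hvmax : S'.max' hS'ne = 2*k := max_mem_eq hS'ne hcase (by omega)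
      have hvmin : S'.min' hS'ne = k+1 := min_mem_eq hS'ne hcase (by omega)
      omega
  rw [hphi]
  refine ⟨hsum, hcard, ?_, hnexc, ?_⟩
  · intro x hxm
    rcases (hmem x).mp hxm with rfl | rfl | ⟨hxS, -⟩
    · omega
    · omega
    · exact ⟨h1 x hxS, le_trans (Finset.le_max' S _ hxS) (by omega)⟩
  · rw [← hphi] at hphi' ⊢
    exact hphi'

lemma sum_Icc_two (a c : ℕ) :
    (∑ i ∈ Finset.Icc a (a+c), i) * 2 = (a + (a+c)) * (c+1) := by
  have h1 : Finset.Icc a (a+c) = Finset.Ico a (a+c+1) := by rw [Finset.Ico_add_one_right_eq_Icc]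
  rw [h1, Finset.sum_Ico_eq_sum_range]
  have h2 : a + c + 1 - a = c + 1 := by omega
  rw [h2]
  have h3 : ∑ i ∈ Finset.range (c+1), (a + i) = (c+1)*a + ∑ i ∈ Finset.range (c+1), i := by
    rw [Finset.sum_add_distrib, Finset.sum_const, Finset.card_range, smul_eq_mul]
  rw [h3]
  have h4 := Finset.sum_range_id_mul_two (c+1)
  have h5 : c + 1 - 1 = c := by omega
  rw [h5] at h4
  nlinarith [h4]

lemma phi_main {S : Finset ℕ} (hne : S.Nonempty) (h1 : ∀ x ∈ S, 1 ≤ x)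
    (hexc : ¬ isExc S) :
    (∑ i ∈ phi S, i) = ∑ i ∈ S, i ∧
    ((-1:ℤ)^(phi S).card = -(-1:ℤ)^S.card) ∧
    (∀ x ∈ phi S, 1 ≤ x ∧ x ≤ S.max' hne + 1) ∧
    ¬ isExc (phi S) ∧
    phi (phi S) = S ∧ phi S ≠ S := by
  obtain ⟨hr1, hra, hsm, hsub, hnot⟩ := runT_spec hne h1
  have hsS : S.min' hne ∈ S := Finset.min'_mem _ _
  have haS : S.max' hne ∈ S := Finset.max'_mem _ _
  have hs1 : 1 ≤ S.min' hne := h1 _ hsS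
  have hsa : S.min' hne ≤ S.max' hne := Finset.min'_le _ _ haS
  have hSIcc : S ⊆ Finset.Icc (S.min' hne) (S.max' hne) := by
    intro x hx
    rw [Finset.mem_Icc]
    exact ⟨Finset.min'_le _ _ hx, Finset.le_max' _ _ hx⟩
  by_cases hsr : S.min' hne ≤ (runT S (S.max' hne)).card
  · -- case A
    have ha2s : 2 * S.min' hne ≤ S.max' hne := by
      by_contra hc
      push_neg at hc
      -- then a = 2s-1, r = s, S = Icc s a, exceptional
      have h2 : (runT S (S.max' hne)).card ≤ S.max' hne + 1 - S.min' hne := by omega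
      have hreq : (runT S (S.max' hne)).card = S.min' hne := by omega
      have haeq : S.max' hne = 2 * S.min' hne - 1 := by omega
      apply hexc
      refine ⟨S.min' hne, hs1, Or.inl ?_⟩
      apply Finset.Subset.antisymm
      · intro x hx
        have := hSIcc hx
        rw [Finset.mem_Icc] at this ⊢
        omega
      · intro x hx
        rw [Finset.mem_Icc] at hx
        apply hsub
        rw [Finset.mem_Icc]
        omega
    obtain ⟨hsum, hcard, hbd, hnexc, hinv⟩ := moveA_spec hne h1 hsr ha2s
    refine ⟨hsum, ?_, hbd, hnexc, hinv, ?_⟩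
    · rw [← hcard, pow_succ]
      ring
    · intro he
      rw [he] at hcard
      omega
  · -- case B
    push_neg at hsr
    have ha2r : 2 * (runT S (S.max' hne)).card < S.max' hne := by
      by_contra hc
      push_neg at hc
      have hseq : S.min' hne = (runT S (S.max' hne)).card + 1 := by omega
      have haeq : S.max' hne = 2 * (runT S (S.max' hne)).card := by omega
      apply hexc
      refine ⟨(runT S (S.max' hne)).card, hr1, Or.inr ?_⟩
      apply Finset.Subset.antisymm
      · intro x hx
        have := hSIcc hx
        rw [Finset.mem_Icc] at this ⊢
        omega
      · intro x hx
        rw [Finset.mem_Icc] at hx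
        apply hsub
        rw [Finset.mem_Icc]
        omega
    obtain ⟨hsum, hcard, hbd, hnexc, hinv⟩ := moveB_spec hne h1 hsr ha2r
    refine ⟨hsum, ?_, hbd, hnexc, hinv, ?_⟩
    · rw [hcard, pow_succ]
      ring
    · intro he
      rw [he] at hcard
      omega

lemma pent_inj {c x m : ℤ} (hx : 3*x^2+x = c) (hm : 3*m^2+m = c) : x = m := by
  have h0 : (x - m) * (3*(x+m)+1) = 0 := by linear_combination hx - hm
  rcases mul_eq_zero.mp h0 with h | h
  · omega
  · omega

lemma franklin_nonexc (N : ℕ) (hN : 1 ≤ N) :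
    ∑ S ∈ (((Finset.Icc 1 (N+1)).powerset.filter (fun S => ∑ i ∈ S, i = N)).filter
        (fun S => ¬ isExc S)), (-1:ℤ)^S.card = 0 := by
  classical
  apply Finset.sum_involution (fun S _ => phi S)
  · -- f a + f (phi a) = 0
    intro S hS
    simp only [Finset.mem_filter, Finset.mem_powerset] at hS
    obtain ⟨⟨hsub, hsum⟩, hnexc⟩ := hS
    have hne : S.Nonempty := by
      rcases S.eq_empty_or_nonempty with rfl | h
      · simp at hsum; omega
      · exact h
    have h1 : ∀ x ∈ S, 1 ≤ x := fun x hx => (Finset.mem_Icc.mp (hsub hx)).1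
    obtain ⟨-, hsign, -, -, -, -⟩ := phi_main hne h1 hnexc
    rw [hsign]
    ring
  · -- nontrivial
    intro S hS hfS
    simp only [Finset.mem_filter, Finset.mem_powerset] at hS
    obtain ⟨⟨hsub, hsum⟩, hnexc⟩ := hS
    have hne : S.Nonempty := by
      rcases S.eq_empty_or_nonempty with rfl | h
      · simp at hsum; omega
      · exact h
    have h1 : ∀ x ∈ S, 1 ≤ x := fun x hx => (Finset.mem_Icc.mp (hsub hx)).1
    obtain ⟨-, -, -, -, -, hne'⟩ := phi_main hne h1 hnexc
    exact hne'
  · -- maps into the set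
    intro S hS
    simp only [Finset.mem_filter, Finset.mem_powerset] at hS ⊢
    obtain ⟨⟨hsub, hsum⟩, hnexc⟩ := hS
    have hne : S.Nonempty := by
      rcases S.eq_empty_or_nonempty with rfl | h
      · simp at hsum; omega
      · exact h
    have h1 : ∀ x ∈ S, 1 ≤ x := fun x hx => (Finset.mem_Icc.mp (hsub hx)).1
    obtain ⟨hsum', -, hbd, hnexc', -, -⟩ := phi_main hne h1 hnexc
    have hmax : S.max' hne ≤ N := by
      have : S.max' hne ≤ ∑ i ∈ S, i := by
        apply Finset.single_le_sum (f := fun i => i) (fun i _ => Nat.zero_le i)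
          (Finset.max'_mem _ _)
      omega
    refine ⟨⟨?_, by rw [hsum', hsum]⟩, hnexc'⟩
    intro x hx
    obtain ⟨hx1, hx2⟩ := hbd x hx
    rw [Finset.mem_Icc]
    omega
  · -- involution
    intro S hS
    simp only [Finset.mem_filter, Finset.mem_powerset] at hS
    obtain ⟨⟨hsub, hsum⟩, hnexc⟩ := hS
    have hne : S.Nonempty := by
      rcases S.eq_empty_or_nonempty with rfl | h
      · simp at hsum; omega
      · exact h
    have h1 : ∀ x ∈ S, 1 ≤ x := fun x hx => (Finset.mem_Icc.mp (hsub hx)).1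
    obtain ⟨-, -, -, -, hinv, -⟩ := phi_main hne h1 hnexc
    exact hinv



lemma pent_of_sol {N : ℕ} {m : ℤ} (hm : 3*m^2+m = 2*(N:ℤ)) :
    pent N = (Int.negOnePow m : ℤ) := by
  have hb := g2_bound' (le_of_eq hm)
  rw [pent, Finset.sum_eq_single m]
  · rw [if_pos hm]
  · intro b _ hbne
    rw [if_neg]
    intro hc
    exact hbne (pent_inj hc hm)
  · intro hc
    exfalso
    apply hc
    rw [Finset.mem_Icc]
    omega

lemma pent_no_sol {N : ℕ} (h : ¬ ∃ m : ℤ, 3*m^2+m = 2*(N:ℤ)) : pent N = 0 := by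
  push_neg at h
  rw [pent]
  apply Finset.sum_eq_zero
  intro m _
  rw [if_neg (h m)]

/-- from an exceptional set summing to N, produce the pentagonal witness -/
lemma exc_witness {S : Finset ℕ} {N : ℕ} (hsum : ∑ i ∈ S, i = N) (hexc : isExc S) :
    ∃ m : ℤ, 3*m^2+m = 2*(N:ℤ) ∧ S.card = m.natAbs ∧
      ((0 < m ∧ S = Finset.Icc (m.natAbs + 1) (2*m.natAbs)) ∨
       (m < 0 ∧ S = Finset.Icc m.natAbs (2*m.natAbs - 1))) := by
  obtain ⟨k, hk1, hcase | hcase⟩ := hexc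
  · -- S = Icc k (2k-1), m = -k
    refine ⟨-(k:ℤ), ?_, ?_, Or.inr ⟨by omega, by rw [hcase]; congr 1 <;> omega⟩⟩
    · have h2 : Finset.Icc k (2*k-1) = Finset.Icc k (k + (k-1)) := by congr 1; omega
      rw [hcase, h2] at hsum
      have hs2 := sum_Icc_two k (k-1)
      have hN : (k + (k + (k-1))) * ((k-1)+1) = 2*N := by omega
      zify [hk1] at hN
      linear_combination hN
    · rw [hcase, Nat.card_Icc]
      simp only [Int.natAbs_neg, Int.natAbs_natCast]
      omega
  · -- S = Icc (k+1) (2k), m = k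
    refine ⟨(k:ℤ), ?_, ?_, Or.inl ⟨by omega, by rw [hcase]; congr 1 <;> omega⟩⟩
    · have h2 : Finset.Icc (k+1) (2*k) = Finset.Icc (k+1) ((k+1) + (k-1)) := by congr 1; omega
      rw [hcase, h2] at hsum
      have hs2 := sum_Icc_two (k+1) (k-1)
      have hN : ((k+1) + ((k+1) + (k-1))) * ((k-1)+1) = 2*N := by omega
      zify [hk1] at hN
      linear_combination hN
    · rw [hcase, Nat.card_Icc]
      simp only [Int.natAbs_natCast]
      omega

lemma sum_exc (N : ℕ) (hN : 1 ≤ N) :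
    ∑ S ∈ (((Finset.Icc 1 (N+1)).powerset.filter (fun S => ∑ i ∈ S, i = N)).filter
        (fun S => isExc S)), (-1:ℤ)^S.card = pent N := by
  by_cases hex : ∃ m : ℤ, 3*m^2+m = 2*(N:ℤ)
  · obtain ⟨m, hm⟩ := hex
    have hm0 : m ≠ 0 := by
      intro h0
      rw [h0] at hm
      norm_num at hm
      omega
    set k := m.natAbs with hk
    have hk1 : 1 ≤ k := by omega
    -- the exceptional set S₀
    set S₀ : Finset ℕ := if 0 < m then Finset.Icc (k+1) (2*k) else Finset.Icc k (2*k-1)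
      with hS₀
    have hexc0 : isExc S₀ := by
      rw [hS₀]
      split_ifs
      · exact ⟨k, hk1, Or.inr rfl⟩
      · exact ⟨k, hk1, Or.inl rfl⟩
    have hsum0 : ∑ i ∈ S₀, i = N := by
      have hZ : ∀ (u v : ℕ), Finset.Icc u v = S₀ → (∑ i ∈ S₀, i) = N → True := fun _ _ _ _ => trivial
      -- compute directly by cases on sign
      rw [hS₀]
      split_ifs with hpos
      · have h2 : Finset.Icc (k+1) (2*k) = Finset.Icc (k+1) ((k+1) + (k-1)) := by congr 1; omega
        rw [h2]
        have hs2 := sum_Icc_two (k+1) (k-1)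
        have hmk : (k:ℤ) = m := by omega
        have hN : ((k:ℤ)+1 + ((k+1) + (k-1))) * ((k-1)+1) = 2*(N:ℤ) := by
          push_cast [hk1]
          rw [hmk]
          linear_combination hm
        have hNn : ((k+1) + ((k+1) + (k-1))) * ((k-1)+1) = 2*N := by
          zify [hk1]
          push_cast [hk1] at hN ⊢
          linarith
        omega
      · have hneg : m < 0 := by omega
        have h2 : Finset.Icc k (2*k-1) = Finset.Icc k (k + (k-1)) := by congr 1; omega
        rw [h2]
        have hs2 := sum_Icc_two k (k-1)
        have hmk : (k:ℤ) = -m := by omega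
        have hN : ((k:ℤ) + (k + (k-1))) * ((k-1)+1) = 2*(N:ℤ) := by
          push_cast [hk1]
          rw [hmk]
          linear_combination hm
        have hNn : (k + (k + (k-1))) * ((k-1)+1) = 2*N := by
          zify [hk1]
          push_cast [hk1] at hN ⊢
          linarith
        omega
    have hcard0 : S₀.card = k := by
      rw [hS₀]
      split_ifs
      · rw [Nat.card_Icc]; omega
      · rw [Nat.card_Icc]; omega
    have hS0mem : S₀ ∈ ((Finset.Icc 1 (N+1)).powerset.filter
        (fun S => ∑ i ∈ S, i = N)).filter (fun S => isExc S) := by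
      rw [Finset.mem_filter, Finset.mem_filter, Finset.mem_powerset]
      refine ⟨⟨?_, hsum0⟩, hexc0⟩
      intro x hx
      have hx2 : x ≤ ∑ i ∈ S₀, i := by
        apply Finset.single_le_sum (f := fun i => i) (fun i _ => Nat.zero_le i) hx
      have hx1 : 1 ≤ x := by
        rw [hS₀] at hx
        split_ifs at hx <;> rw [Finset.mem_Icc] at hx <;> omega
      rw [Finset.mem_Icc]
      omega
    have huniq : ∀ S ∈ ((Finset.Icc 1 (N+1)).powerset.filter
        (fun S => ∑ i ∈ S, i = N)).filter (fun S => isExc S), S = S₀ := by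
      intro S hS
      rw [Finset.mem_filter, Finset.mem_filter, Finset.mem_powerset] at hS
      obtain ⟨⟨hsub, hsum⟩, hexcS⟩ := hS
      obtain ⟨m', hm', hcard', hshape⟩ := exc_witness hsum hexcS
      have hmm : m' = m := pent_inj hm' hm
      subst hmm
      rw [hS₀]
      rcases hshape with ⟨hp, hsh⟩ | ⟨hp, hsh⟩
      · rw [if_pos hp, hsh]
      · rw [if_neg (by omega), hsh]
    have hset : ((Finset.Icc 1 (N+1)).powerset.filter
        (fun S => ∑ i ∈ S, i = N)).filter (fun S => isExc S) = {S₀} :=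
      Finset.eq_singleton_iff_unique_mem.mpr ⟨hS0mem, huniq⟩
    rw [hset, Finset.sum_singleton, hcard0, pent_of_sol hm]
    have : m.negOnePow = Int.negOnePow (k : ℤ) := by
      rcases lt_or_gt_of_ne hm0 with hneg | hpos
      · rw [show (k:ℤ) = -m by omega, Int.negOnePow_neg]
      · rw [show (k:ℤ) = m by omega]
    rw [this, Int.coe_negOnePow_natCast]
  · rw [pent_no_sol hex]
    have hempty : ((Finset.Icc 1 (N+1)).powerset.filter
        (fun S => ∑ i ∈ S, i = N)).filter (fun S => isExc S) = ∅ := by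
      apply Finset.eq_empty_of_forall_notMem
      intro S hS
      rw [Finset.mem_filter, Finset.mem_filter, Finset.mem_powerset] at hS
      obtain ⟨⟨hsub, hsum⟩, hexcS⟩ := hS
      obtain ⟨m', hm', -, -⟩ := exc_witness hsum hexcS
      exact hex ⟨m', hm'⟩
    rw [hempty, Finset.sum_empty]



lemma coeff_E1_sum (N : ℕ) :
    PowerSeries.coeff (R := ℤ) N (E 1) = ∑ S ∈ (Finset.Icc 1 (N+1)).powerset,
      (if ∑ i ∈ S, i = N then (-1:ℤ)^S.card else 0) := by
  rw [E, PowerSeries.coeff_mk]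
  have hexp : ∀ n ∈ Finset.range (N+1), (1 : PowerSeries ℤ) - PowerSeries.X^(1*(n+1))
      = -PowerSeries.X^(n+1) + 1 := by
    intro n _
    rw [one_mul]
    ring
  rw [Finset.prod_congr rfl hexp, Finset.prod_add, map_sum]
  have hterm : ∀ t ∈ (Finset.range (N+1)).powerset,
      PowerSeries.coeff (R := ℤ) N ((∏ i ∈ t, (-(PowerSeries.X : PowerSeries ℤ)^(i+1))) *
        ∏ i ∈ (Finset.range (N+1)) \ t, (1:PowerSeries ℤ))
      = if (∑ i ∈ t, (i+1)) = N then (-1:ℤ)^t.card else 0 := by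
    intro t _
    rw [Finset.prod_const_one, mul_one]
    have h1 : ∏ i ∈ t, (-(PowerSeries.X : PowerSeries ℤ)^(i+1))
        = (PowerSeries.C (R := ℤ) ((-1:ℤ)^t.card)) * PowerSeries.X^(∑ i ∈ t, (i+1)) := by
      have h2 : ∀ i ∈ t, (-(PowerSeries.X : PowerSeries ℤ)^(i+1))
          = (PowerSeries.C (R := ℤ) (-1)) * PowerSeries.X^(i+1) := by
        intro i _
        rw [map_neg, map_one]
        ring
      rw [Finset.prod_congr rfl h2, Finset.prod_mul_distrib, Finset.prod_const,
        ← map_pow, Finset.prod_pow_eq_pow_sum]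
    rw [h1, PowerSeries.coeff_C_mul, PowerSeries.coeff_X_pow]
    by_cases h : (∑ i ∈ t, (i+1)) = N
    · rw [if_pos h.symm, if_pos h, mul_one]
    · rw [if_neg (fun hc => h hc.symm), if_neg h, mul_zero]
  rw [Finset.sum_congr rfl hterm]
  apply Finset.sum_nbij' (i := fun t => t.image (· + 1)) (j := fun S => S.image (· - 1))
  · intro t ht
    rw [Finset.mem_powerset] at ht ⊢
    intro x hx
    rw [Finset.mem_image] at hx
    obtain ⟨y, hy, rfl⟩ := hx
    have := ht hy
    rw [Finset.mem_range] at this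
    rw [Finset.mem_Icc]
    omega
  · intro S hS
    rw [Finset.mem_powerset] at hS ⊢
    intro x hx
    rw [Finset.mem_image] at hx
    obtain ⟨y, hy, rfl⟩ := hx
    have := hS hy
    rw [Finset.mem_Icc] at this
    rw [Finset.mem_range]
    omega
  · intro t ht
    ext x
    simp only [Finset.mem_image]
    constructor
    · rintro ⟨y, ⟨z, hz, rfl⟩, rfl⟩
      simpa using hz
    · intro hx
      exact ⟨x + 1, ⟨x, hx, rfl⟩, by omega⟩
  · intro S hS
    rw [Finset.mem_powerset] at hS
    ext x
    simp only [Finset.mem_image]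
    constructor
    · rintro ⟨y, ⟨z, hz, rfl⟩, rfl⟩
      have := hS hz
      rw [Finset.mem_Icc] at this
      have hz1 : 1 ≤ z := this.1
      simpa [Nat.sub_add_cancel hz1] using hz
    · intro hx
      have := hS hx
      rw [Finset.mem_Icc] at this
      exact ⟨x - 1, ⟨x, hx, rfl⟩, by omega⟩
  · intro t ht
    have hsum : ∑ x ∈ t.image (· + 1), x = ∑ i ∈ t, (i+1) :=
      Finset.sum_image (fun a _ b _ h => by omega)
    have hcard : (t.image (· + 1)).card = t.card :=
      Finset.card_image_of_injOn (fun a _ b _ h => by omega)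
    rw [hsum, hcard]

lemma pentagonal_thm : E 1 = P := by
  ext N
  rw [P, PowerSeries.coeff_mk]
  rcases Nat.eq_zero_or_pos N with rfl | hN
  · rw [coeff_E1_sum, pent_of_sol (N := 0) (m := 0) (by norm_num), Int.negOnePow_zero]
    decide
  · rw [coeff_E1_sum, ← Finset.sum_filter,
      ← Finset.sum_filter_add_sum_filter_not _ (fun S => isExc S) _,
      franklin_nonexc N hN, sum_exc N hN, add_zero]


end

lemma cubeSub_pow (f : PowerSeries ℤ) (k : ℕ) : cubeSub (f ^ k) = cubeSub f ^ k := by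
  induction k with
  | zero => simpa using cubeSub_one
  | succ m ih => rw [pow_succ, pow_succ, cubeSub_mul, ih]

theorem a1_three_n (n : ℕ) :
    PowerSeries.coeff (R := ℤ) (3 * n) (E 1 ^ 3 * inv1 (E 3 ^ 4)) = cphi 3 n := by
  have hc4 : PowerSeries.constantCoeff (R := ℤ) (E 1 ^ 4) = 1 := by
    rw [map_pow, constCoeff_E1, one_pow]
  have hc3 : PowerSeries.constantCoeff (R := ℤ) (E 1 ^ 3) = 1 := by
    rw [map_pow, constCoeff_E1, one_pow]
  have h1 : E 3 ^ 4 = cubeSub (E 1 ^ 4) := by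
    rw [E_three, cubeSub_pow]
  have h2 : inv1 (E 3 ^ 4) = cubeSub (inv1 (E 1 ^ 4)) := by
    rw [h1, cubeSub_inv1 _ hc4]
  have h3 : ext3 (E 1 ^ 3) = frobTheta 3 * E 1 := by
    rw [pentagonal_thm]
    ext N
    rw [ext3, PowerSeries.coeff_mk]
    exact key3 N
  have h4 : E 1 * inv1 (E 1 ^ 4) = inv1 (E 1 ^ 3) := by
    symm
    apply inv1_unique _ _ hc3
    calc E 1 ^ 3 * (E 1 * inv1 (E 1 ^ 4)) = E 1 ^ 4 * inv1 (E 1 ^ 4) := by ring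
      _ = 1 := inv1_spec _ hc4
  have h5 : PowerSeries.coeff (R := ℤ) (3 * n) (E 1 ^ 3 * cubeSub (inv1 (E 1 ^ 4)))
      = PowerSeries.coeff (R := ℤ) n (ext3 (E 1 ^ 3) * inv1 (E 1 ^ 4)) := by
    rw [← ext3_mul_cubeSub, ext3, PowerSeries.coeff_mk]
  rw [h2, h5, h3, cphi]
  rw [mul_assoc, h4]
end
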